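/- arXiv:1608.05089 — 5 statements merged into one kernel-verified Lean document; each statement's English description precedes it below -/
import Mathlib

section
/- Let L be a rank-l primitive sublattice of Z^n with l < n, let E be the subspace spanned by L, and let pi be the orthogonal projection onto the orthogonal complement of E. Then the diameter of the Voronoi cell of the factor lattice pi(Z^n) is at most sqrt(n - l). -/
/-!
Pick `l = dim E` coordinates `S` onto which `E` projects surjectively. A point `y ⊥ E` can then
be moved inside `y + E` to a point `x` vanishing on `S`; rounding the other `n - l` coordinates of
`x` gives an integer point `z` with `|x - z| ≤ √(n - l) / 2`. Since `π` fixes `y`, kills `E` and is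
a contraction, `|y - π z| ≤ √(n - l) / 2`, so the Voronoi cell lies in the ball of that radius.
-/

open scoped BigOperators

/-- Euclidean dot product. -/
def dotp {d : ℕ} (x y : Fin d → ℝ) : ℝ := ∑ i, x i * y i

/-- Euclidean norm. -/
noncomputable def euclNorm {d : ℕ} (x : Fin d → ℝ) : ℝ := Real.sqrt (dotp x x)

section Coordinates

variable {K ι : Type*} [Field K] [Fintype ι]

lemma Submodule.exists_ne_zero_mem_forall_mem_eq_zero {E : Submodule K (ι → K)} {S : Finset ι}
    (hS : S.card < Module.finrank K E) : ∃ e ∈ E, e ≠ 0 ∧ ∀ j ∈ S, e j = 0 := by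
  let restrict : E →ₗ[K] (S → K) := LinearMap.funLeft K K (Subtype.val : S → ι) ∘ₗ E.subtype
  have hker : LinearMap.ker restrict ≠ ⊥ :=
    LinearMap.ker_ne_bot_of_finrank_lt (by simpa using hS)
  obtain ⟨⟨e, heE⟩, hker, hne⟩ := (Submodule.ne_bot_iff _).mp hker
  refine ⟨e, heE, by simpa using hne, fun j hj => ?_⟩
  exact congrFun (LinearMap.mem_ker.mp hker) ⟨j, hj⟩

lemma Submodule.exists_card_eq_finrank_forall_exists_eqOn [DecidableEq ι]
    (E : Submodule K (ι → K)) :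
    ∃ S : Finset ι, S.card = Module.finrank K E ∧ ∀ t : ι → K, ∃ e ∈ E, ∀ j ∈ S, e j = t j := by
  suffices ∀ k ≤ Module.finrank K E, ∃ S : Finset ι, S.card = k ∧
      ∀ t : ι → K, ∃ e ∈ E, ∀ j ∈ S, e j = t j from this _ le_rfl
  intro k
  induction k with
  | zero => exact fun _ => ⟨∅, rfl, fun _ => ⟨0, E.zero_mem, by simp⟩⟩
  | succ k ih =>
    intro hk
    obtain ⟨S, rfl, hsurj⟩ := ih (Nat.le_of_succ_le hk)
    obtain ⟨e, heE, hne, heS⟩ := E.exists_ne_zero_mem_forall_mem_eq_zero hk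
    obtain ⟨i, hi⟩ : ∃ i, e i ≠ 0 := Function.ne_iff.mp hne
    have hiS : i ∉ S := fun h => hi (heS i h)
    refine ⟨insert i S, Finset.card_insert_of_notMem hiS, fun t => ?_⟩
    obtain ⟨e₀, he₀E, he₀⟩ := hsurj t
    -- correct `e₀` at the new coordinate `i` by a multiple of `e`, which vanishes on `S`
    refine ⟨e₀ + ((t i - e₀ i) / e i) • e, E.add_mem he₀E (E.smul_mem _ heE), fun j hj => ?_⟩
    rcases Finset.mem_insert.mp hj with rfl | hj
    · simp only [Pi.add_apply, Pi.smul_apply, smul_eq_mul]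
      field_simp
      ring
    · simp [heS j hj, he₀ j hj]

end Coordinates

section Euclidean

variable {d : ℕ}

lemma dotp_self_nonneg (x : Fin d → ℝ) : 0 ≤ dotp x x :=
  Finset.sum_nonneg fun _ _ => mul_self_nonneg _

lemma eq_zero_of_dotp_self_eq_zero {x : Fin d → ℝ} (h : dotp x x = 0) : x = 0 := by
  funext i
  simpa [mul_self_eq_zero] using
    (Finset.sum_eq_zero_iff_of_nonneg fun i _ => mul_self_nonneg (x i)).mp h i (Finset.mem_univ i)

lemma dotp_add_self (a b : Fin d → ℝ) :
    dotp (a + b) (a + b) = dotp a a + 2 * dotp a b + dotp b b := by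
  simp only [dotp, Pi.add_apply, Finset.mul_sum, ← Finset.sum_add_distrib]
  exact Finset.sum_congr rfl fun i _ => by ring

lemma dotp_sub_left (a b c : Fin d → ℝ) : dotp (a - b) c = dotp a c - dotp b c := by
  simp [dotp, sub_mul, Finset.sum_sub_distrib]

lemma euclNorm_eq_norm (x : Fin d → ℝ) : euclNorm x = ‖WithLp.toLp 2 x‖ := by
  rw [EuclideanSpace.norm_eq]
  simp [euclNorm, dotp, ← sq, sq_abs]

lemma euclNorm_sub_le (a b : Fin d → ℝ) : euclNorm (a - b) ≤ euclNorm a + euclNorm b := by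
  simpa only [euclNorm_eq_norm, WithLp.toLp_sub] using norm_sub_le _ _

lemma euclNorm_le_of_dotp_le {a b : Fin d → ℝ} (h : dotp a a ≤ dotp b b) :
    euclNorm a ≤ euclNorm b :=
  Real.sqrt_le_sqrt h

lemma euclNorm_sub_round_le {S : Finset (Fin d)} {x : Fin d → ℝ}
    (hx : ∀ j ∈ S, x j = 0) :
    euclNorm (x - fun j => (round (x j) : ℝ)) ≤ Real.sqrt ((d : ℝ) - S.card) / 2 := by
  set r : Fin d → ℝ := x - fun j => (round (x j) : ℝ)
  have hr : ∀ j, r j * r j ≤ 1 / 4 := fun j => by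
    have := abs_le.mp (abs_sub_round (x j))
    simp only [r, Pi.sub_apply]
    nlinarith
  have hrS : ∀ j ∈ S, r j = 0 := fun j hj => by simp [r, hx j hj]
  have hdot : dotp r r ≤ ((d : ℝ) - S.card) / 4 := calc
    dotp r r = ∑ j ∈ Sᶜ, r j * r j :=
      (Finset.sum_subset (Finset.subset_univ _) fun j _ hj => by
        simp [hrS j (by simpa using hj)]).symm
    _ ≤ Sᶜ.card • (1 / 4 : ℝ) := Finset.sum_le_card_nsmul _ _ _ fun j _ => hr j
    _ = ((d : ℝ) - S.card) / 4 := by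
      rw [Finset.card_compl, Fintype.card_fin, nsmul_eq_mul,
        Nat.cast_sub (by simpa using S.card_le_univ)]
      ring
  calc euclNorm r ≤ Real.sqrt (((d : ℝ) - S.card) / 4) := Real.sqrt_le_sqrt hdot
    _ = Real.sqrt ((d : ℝ) - S.card) / 2 := by
      rw [Real.sqrt_div' _ (by norm_num), show (4 : ℝ) = 2 ^ 2 by norm_num,
        Real.sqrt_sq (by norm_num)]

end Euclidean

def IsOrthogonalProjection {d : ℕ} (E : Submodule ℝ (Fin d → ℝ))
    (π : (Fin d → ℝ) →ₗ[ℝ] (Fin d → ℝ)) : Prop :=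
  ∀ x, (∀ v ∈ E, dotp (π x) v = 0) ∧ x - π x ∈ E

namespace IsOrthogonalProjection

variable {d : ℕ} {E : Submodule ℝ (Fin d → ℝ)} {π : (Fin d → ℝ) →ₗ[ℝ] (Fin d → ℝ)}

lemma map_eq_zero_of_mem (hπ : IsOrthogonalProjection E π) {e : Fin d → ℝ} (he : e ∈ E) :
    π e = 0 := by
  have hπe : π e ∈ E := by simpa using E.sub_mem he (hπ e).2
  exact eq_zero_of_dotp_self_eq_zero ((hπ e).1 _ hπe)

lemma map_eq_self (hπ : IsOrthogonalProjection E π) {y : Fin d → ℝ}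
    (hy : ∀ v ∈ E, dotp y v = 0) :
    π y = y := by
  have h := (hπ y).2
  have : dotp (y - π y) (y - π y) = 0 := by
    rw [dotp_sub_left, hy _ h, (hπ y).1 _ h, sub_zero]
  exact (sub_eq_zero.mp (eq_zero_of_dotp_self_eq_zero this)).symm

lemma euclNorm_map_le (hπ : IsOrthogonalProjection E π) (w : Fin d → ℝ) :
    euclNorm (π w) ≤ euclNorm w := by
  apply euclNorm_le_of_dotp_le
  -- Pythagoras for `w = π w + (w - π w)`
  have h := dotp_add_self (π w) (w - π w)
  rw [add_sub_cancel, (hπ w).1 _ (hπ w).2] at h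
  linarith [dotp_self_nonneg (w - π w)]

lemma exists_euclNorm_sub_map_le (hπ : IsOrthogonalProjection E π) {y : Fin d → ℝ}
    (hy : ∀ v ∈ E, dotp y v = 0) :
    ∃ z : Fin d → ℝ, (∀ i, ∃ m : ℤ, z i = m) ∧
      euclNorm (y - π z) ≤ Real.sqrt ((d : ℝ) - Module.finrank ℝ E) / 2 := by
  obtain ⟨S, hS, hsurj⟩ := E.exists_card_eq_finrank_forall_exists_eqOn
  obtain ⟨e, heE, he⟩ := hsurj (-y)
  set x := y + e
  have hx : ∀ j ∈ S, x j = 0 := fun j hj => by simp [x, he j hj]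
  set z : Fin d → ℝ := fun j => (round (x j) : ℝ)
  refine ⟨z, fun j => ⟨_, rfl⟩, ?_⟩
  have hproj : y - π z = π (x - z) := by
    rw [map_sub, map_add, hπ.map_eq_self hy, hπ.map_eq_zero_of_mem heE, add_zero]
  rw [hproj, ← hS]
  exact (hπ.euclNorm_map_le _).trans (euclNorm_sub_round_le hx)

end IsOrthogonalProjection

theorem stmt1_general {n l : ℕ}
    (E : Submodule ℝ (Fin n → ℝ))
    (hrank : Module.finrank ℝ E = l)
    (π : (Fin n → ℝ) →ₗ[ℝ] (Fin n → ℝ))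
    (hπ : ∀ x, (∀ v ∈ E, dotp (π x) v = 0) ∧ x - π x ∈ E)
    (K : Set (Fin n → ℝ))
    (hK : K = π '' {x | ∀ i, ∃ m : ℤ, x i = m})
    (Vor : Set (Fin n → ℝ))
    (hVor : Vor = {y | (∀ v ∈ E, dotp y v = 0) ∧
        ∀ v ∈ K, v ≠ 0 → euclNorm y ≤ euclNorm (y - v)}) :
    ∀ y₁ ∈ Vor, ∀ y₂ ∈ Vor, euclNorm (y₁ - y₂) ≤ Real.sqrt ((n : ℝ) - l) := by
  subst hrank hK
  have hcell : ∀ y ∈ Vor, euclNorm y ≤ Real.sqrt ((n : ℝ) - Module.finrank ℝ E) / 2 := by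
    rw [hVor]
    rintro y ⟨hyE, hyV⟩
    obtain ⟨z, hz, hyz⟩ := IsOrthogonalProjection.exists_euclNorm_sub_map_le hπ hyE
    by_cases h0 : π z = 0
    · simpa [h0] using hyz
    · exact (hyV _ ⟨z, hz, rfl⟩ h0).trans hyz
  intro y₁ hy₁ y₂ hy₂
  calc euclNorm (y₁ - y₂) ≤ euclNorm y₁ + euclNorm y₂ := euclNorm_sub_le _ _
    _ ≤ _ := add_le_add (hcell y₁ hy₁) (hcell y₂ hy₂)
    _ = _ := add_halves _

theorem stmt1 {n l : ℕ} (hl : l < n)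
    (L : Submodule ℤ (Fin n → ℝ))
    (hint : ∀ x ∈ L, ∀ i, ∃ m : ℤ, x i = m)
    (E : Submodule ℝ (Fin n → ℝ))
    (hE : E = Submodule.span ℝ (L : Set (Fin n → ℝ)))
    (hrank : Module.finrank ℝ E = l)
    (hprim : ∀ x : Fin n → ℝ, (∀ i, ∃ m : ℤ, x i = m) → x ∈ E → x ∈ L)
    (π : (Fin n → ℝ) →ₗ[ℝ] (Fin n → ℝ))
    (hπ : ∀ x, (∀ v ∈ E, dotp (π x) v = 0) ∧ x - π x ∈ E)
    (K : Set (Fin n → ℝ))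
    (hK : K = π '' {x | ∀ i, ∃ m : ℤ, x i = m})
    (Vor : Set (Fin n → ℝ))
    (hVor : Vor = {y | (∀ v ∈ E, dotp y v = 0) ∧
        ∀ v ∈ K, v ≠ 0 → euclNorm y ≤ euclNorm (y - v)}) :
    ∀ y₁ ∈ Vor, ∀ y₂ ∈ Vor, euclNorm (y₁ - y₂) ≤ Real.sqrt ((n : ℝ) - l) :=
  stmt1_general E hrank π hπ K hK Vor hVor
end

section
/- Let K be a rank-m integral lattice in Z^n with generating matrix M_K in Hermite normal form. Then there exist a unique n-by-m integer matrix M_P in Hermite normal form (with the same pivot rows as M_K) generating a primitive lattice, and a unique m-by-m upper-triangular integer matrix F with positive diagonal entries, such that M_K = M_P * F. -/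
open scoped BigOperators

/-- An integer matrix is in (column-style) Hermite normal form with pivot rows `piv`. -/
def IsHNF {n m : ℕ} (M : Matrix (Fin n) (Fin m) ℤ) (piv : Fin m → Fin n) : Prop :=
  StrictMono piv ∧ (∀ j i, piv j < i → M i j = 0) ∧ (∀ j, 0 < M (piv j) j) ∧
    (∀ j l, j < l → 0 ≤ M (piv j) l ∧ M (piv j) l < M (piv j) j)

/-- The columns of `M` generate a primitive sublattice of `ℤ^n`: every integer
vector in the real span of the columns is an integer combination of the columns. -/
def GeneratesPrimitive {n m : ℕ} (M : Matrix (Fin n) (Fin m) ℤ) : Prop :=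
  ∀ x : Fin n → ℤ,
    (∃ c : Fin m → ℝ, (fun i => (x i : ℝ)) = (M.map (Int.cast : ℤ → ℝ)).mulVec c) →
    ∃ c : Fin m → ℤ, x = M.mulVec c

section HNF
variable {n m : ℕ}
attribute [local instance] Classical.propDecidable

/-- cast of an integer mulVec is the real mulVec of casts -/
lemma castRow (M : Matrix (Fin n) (Fin m) ℤ) (c : Fin m → ℤ) :
    (fun i => ((M.mulVec c) i : ℝ)) =
      (M.map (Int.cast : ℤ → ℝ)).mulVec (fun k => (c k : ℝ)) := by
  funext i
  simp [Matrix.mulVec, dotProduct, Matrix.map_apply]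

lemma hnf_profile (M : Matrix (Fin n) (Fin m) ℤ) (piv : Fin m → Fin n) (hM : IsHNF M piv)
    {x : Fin n → ℤ} {c : Fin m → ℝ}
    (hx : (fun i => (x i : ℝ)) = (M.map (Int.cast : ℤ → ℝ)).mulVec c) (J : ℕ)
    (h0 : ∀ i, (∀ k : Fin m, (k : ℕ) < J → piv k < i) → x i = 0) :
    ∀ k : Fin m, J ≤ (k : ℕ) → c k = 0 := by
  classical
  by_contra hcon
  push_neg at hcon
  obtain ⟨k, hkJ, hck⟩ := hcon
  set Fs : Finset (Fin m) := Finset.univ.filter (fun k => J ≤ (k : ℕ) ∧ c k ≠ 0) with hFs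
  have hne : Fs.Nonempty := ⟨k, by simp [hFs, hkJ, hck]⟩
  set k0 := Fs.max' hne with hk0
  have hk0mem : k0 ∈ Fs := Fs.max'_mem hne
  rw [hFs, Finset.mem_filter] at hk0mem
  have hxk0 : x (piv k0) = 0 := by
    apply h0
    intro k' hk'
    exact hM.1 (show k' < k0 from by
      have := hk0mem.2.1
      omega)
  have hrow := congrFun hx (piv k0)
  have hsum : (M.map (Int.cast : ℤ → ℝ)).mulVec c (piv k0)
      = ((M (piv k0) k0 : ℝ)) * c k0 := by
    simp only [Matrix.mulVec, dotProduct, Matrix.map_apply]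
    apply Finset.sum_eq_single k0
    · intro l _ hl
      rcases lt_or_gt_of_ne hl with hlt | hgt
      · have : M (piv k0) l = 0 := hM.2.1 l (piv k0) (hM.1 hlt)
        simp [this]
      · have : c l = 0 := by
          by_contra hcl
          have hlmem : l ∈ Fs := by
            rw [hFs, Finset.mem_filter]
            refine ⟨Finset.mem_univ _, ?_, hcl⟩
            have : (k0 : ℕ) < (l : ℕ) := hgt
            omega
          have hle := Fs.le_max' l hlmem
          rw [← hk0] at hle
          exact absurd hle (not_le.mpr hgt)
        simp [this]
    · intro hk0'
      exact absurd (Finset.mem_univ k0) hk0'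
  rw [hxk0, hsum] at hrow
  have hpos : (0:ℝ) < (M (piv k0) k0 : ℝ) := by exact_mod_cast hM.2.2.1 k0
  have : c k0 = 0 := by
    have hrow' : (M (piv k0) k0 : ℝ) * c k0 = 0 := by exact_mod_cast hrow.symm
    rcases mul_eq_zero.mp hrow' with h1 | h2
    · exact absurd h1 hpos.ne'
    · exact h2
  exact hk0mem.2.2 this

lemma hnf_profileZ (M : Matrix (Fin n) (Fin m) ℤ) (piv : Fin m → Fin n) (hM : IsHNF M piv)
    {x : Fin n → ℤ} {c : Fin m → ℤ} (hx : x = M.mulVec c) (J : ℕ)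
    (h0 : ∀ i, (∀ k : Fin m, (k : ℕ) < J → piv k < i) → x i = 0) :
    ∀ k : Fin m, J ≤ (k : ℕ) → c k = 0 := by
  have hcast : (fun i => (x i : ℝ)) = (M.map (Int.cast : ℤ → ℝ)).mulVec (fun k => (c k : ℝ)) := by
    rw [← castRow]; funext i; rw [hx]
  intro k hk
  exact_mod_cast hnf_profile M piv hM hcast J h0 k hk

lemma hnf_mulVec_inj (M : Matrix (Fin n) (Fin m) ℤ) (piv : Fin m → Fin n) (hM : IsHNF M piv)
    {a b : Fin m → ℤ} (hab : M.mulVec a = M.mulVec b) : a = b := by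
  have h0 : (0 : Fin n → ℤ) = M.mulVec (a - b) := by
    rw [Matrix.mulVec_sub, hab, sub_self]
  have := hnf_profileZ M piv hM h0 0 (fun i _ => rfl)
  funext k
  have := this k (Nat.zero_le _)
  have : a k - b k = 0 := by simpa using this
  omega

lemma vanish_top (M : Matrix (Fin n) (Fin m) ℤ) (piv : Fin m → Fin n) (hM : IsHNF M piv)
    {x : Fin n → ℤ} {c : Fin m → ℝ}
    (hx : (fun i => (x i : ℝ)) = (M.map (Int.cast : ℤ → ℝ)).mulVec c)
    (i : Fin n) (hi : ∀ k, piv k < i) : x i = 0 := by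
  have hrow := congrFun hx i
  have : ((x i : ℝ)) = 0 := by
    rw [hrow]
    simp only [Matrix.mulVec, dotProduct, Matrix.map_apply]
    apply Finset.sum_eq_zero
    intro l _
    have : M i l = 0 := hM.2.1 l i (hi l)
    simp [this]
  exact_mod_cast this

lemma vanish_step (M : Matrix (Fin n) (Fin m) ℤ) (piv : Fin m → Fin n) (hM : IsHNF M piv)
    {x : Fin n → ℤ} {c : Fin m → ℝ}
    (hx : (fun i => (x i : ℝ)) = (M.map (Int.cast : ℤ → ℝ)).mulVec c) (j : Fin m)
    (h1 : ∀ i, piv j < i → x i = 0) (h2 : x (piv j) = 0) :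
    ∀ i, (∀ k : Fin m, (k : ℕ) < (j : ℕ) → piv k < i) → x i = 0 := by
  have hup : ∀ k : Fin m, (j : ℕ) + 1 ≤ (k : ℕ) → c k = 0 := by
    apply hnf_profile M piv hM hx ((j : ℕ) + 1)
    intro i hi
    exact h1 i (hi j (by omega))
  have hcj : c j = 0 := by
    have hrow := congrFun hx (piv j)
    have hsum : (M.map (Int.cast : ℤ → ℝ)).mulVec c (piv j) = ((M (piv j) j : ℝ)) * c j := by
      simp only [Matrix.mulVec, dotProduct, Matrix.map_apply]
      apply Finset.sum_eq_single j
      · intro l _ hl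
        rcases lt_or_gt_of_ne hl with hlt | hgt
        · have : M (piv j) l = 0 := hM.2.1 l (piv j) (hM.1 hlt)
          simp [this]
        · have : c l = 0 := hup l (by exact_mod_cast hgt)
          simp [this]
      · intro hj'; exact absurd (Finset.mem_univ j) hj'
    rw [h2, hsum] at hrow
    have hpos : (0:ℝ) < (M (piv j) j : ℝ) := by exact_mod_cast hM.2.2.1 j
    have hrow' : (M (piv j) j : ℝ) * c j = 0 := by exact_mod_cast hrow.symm
    rcases mul_eq_zero.mp hrow' with hz | hz
    · exact absurd hz hpos.ne'
    · exact hz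
  intro i hi
  have hrow := congrFun hx i
  have : ((x i : ℝ)) = 0 := by
    rw [hrow]
    simp only [Matrix.mulVec, dotProduct, Matrix.map_apply]
    apply Finset.sum_eq_zero
    intro l _
    rcases lt_or_ge (l : ℕ) (j : ℕ) with hlt | hge
    · have : M i l = 0 := hM.2.1 l i (hi l hlt)
      simp [this]
    · rcases eq_or_lt_of_le hge with heq | hgt
      · have : l = j := Fin.ext heq.symm
        rw [this, hcj, mul_zero]
      · have : c l = 0 := hup l (by omega)
        simp [this]
  exact_mod_cast this

def inL (MK : Matrix (Fin n) (Fin m) ℤ) (x : Fin n → ℤ) : Prop :=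
  ∃ c : Fin m → ℝ, (fun i => (x i : ℝ)) = (MK.map (Int.cast : ℤ → ℝ)).mulVec c

lemma inL_sub_smul {MK : Matrix (Fin n) (Fin m) ℤ} {x w : Fin n → ℤ} (a : ℤ)
    (hx : inL MK x) (hw : inL MK w) : inL MK (fun i => x i - a * w i) := by
  obtain ⟨c1, hc1⟩ := hx
  obtain ⟨c2, hc2⟩ := hw
  refine ⟨fun k => c1 k - (a : ℝ) * c2 k, ?_⟩
  funext i
  have h1 := congrFun hc1 i
  have h2 := congrFun hc2 i
  simp only [Matrix.mulVec, dotProduct, Matrix.map_apply] at h1 h2 ⊢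
  push_cast
  rw [h1, h2, Finset.mul_sum, ← Finset.sum_sub_distrib]
  congr 1; funext k; ring

lemma inL_col {MK : Matrix (Fin n) (Fin m) ℤ} (j : Fin m) : inL MK (fun i => MK i j) := by
  classical
  refine ⟨fun k => if k = j then 1 else 0, ?_⟩
  funext i
  simp [Matrix.mulVec, dotProduct, Matrix.map_apply, Finset.sum_ite_eq', mul_comm]

lemma hgex (MK : Matrix (Fin n) (Fin m) ℤ) (piv : Fin m → Fin n) (h : IsHNF MK piv) (j : Fin m) :
    ∃ a : ℕ, 0 < a ∧ ∃ x, inL MK x ∧ (∀ i, piv j < i → x i = 0) ∧ x (piv j) = (a : ℤ) := by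
  refine ⟨(MK (piv j) j).toNat, ?_, fun i => MK i j, inL_col j, fun i hi => h.2.1 j i hi, ?_⟩
  · have := h.2.2.1 j; omega
  · show MK (piv j) j = ((MK (piv j) j).toNat : ℤ)
    have := h.2.2.1 j; omega

noncomputable def gnat (MK : Matrix (Fin n) (Fin m) ℤ) (piv : Fin m → Fin n)
    (h : IsHNF MK piv) (j : Fin m) : ℕ :=
  Nat.find (hgex MK piv h j)

lemma gnat_pos (MK : Matrix (Fin n) (Fin m) ℤ) (piv : Fin m → Fin n) (h : IsHNF MK piv)
    (j : Fin m) : 0 < gnat MK piv h j :=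
  (Nat.find_spec (hgex MK piv h j)).1

noncomputable def pw (MK : Matrix (Fin n) (Fin m) ℤ) (piv : Fin m → Fin n)
    (h : IsHNF MK piv) (j : Fin m) : Fin n → ℤ :=
  (Nat.find_spec (hgex MK piv h j)).2.choose

lemma pw_spec (MK : Matrix (Fin n) (Fin m) ℤ) (piv : Fin m → Fin n) (h : IsHNF MK piv)
    (j : Fin m) : inL MK (pw MK piv h j) ∧ (∀ i, piv j < i → pw MK piv h j i = 0) ∧
      pw MK piv h j (piv j) = (gnat MK piv h j : ℤ) :=
  (Nat.find_spec (hgex MK piv h j)).2.choose_spec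

lemma g_dvd (MK : Matrix (Fin n) (Fin m) ℤ) (piv : Fin m → Fin n) (h : IsHNF MK piv)
    (j : Fin m) {x : Fin n → ℤ} (hx : inL MK x) (hv : ∀ i, piv j < i → x i = 0) :
    ((gnat MK piv h j : ℤ)) ∣ x (piv j) := by
  set g : ℤ := (gnat MK piv h j : ℤ) with hg
  have hgpos : 0 < g := by have := gnat_pos MK piv h j; omega
  obtain ⟨hwL, hwv, hwp⟩ := pw_spec MK piv h j
  set q : ℤ := x (piv j) / g with hq
  set y : Fin n → ℤ := fun i => x i - q * pw MK piv h j i with hy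
  have hyL : inL MK y := inL_sub_smul q hx hwL
  have hyv : ∀ i, piv j < i → y i = 0 := by
    intro i hi; simp only [hy]; rw [hv i hi, hwv i hi]; ring
  have hyp : y (piv j) = x (piv j) % g := by
    simp only [hy]; rw [hwp, ← hg, Int.emod_def]; ring
  by_cases hr : x (piv j) % g = 0
  · exact Int.dvd_of_emod_eq_zero hr
  · exfalso
    have hrpos : 0 < x (piv j) % g := lt_of_le_of_ne (Int.emod_nonneg _ hgpos.ne') (Ne.symm hr)
    have hrlt : x (piv j) % g < g := Int.emod_lt_of_pos _ hgpos
    have hmem : 0 < (x (piv j) % g).toNat ∧ ∃ z, inL MK z ∧ (∀ i, piv j < i → z i = 0) ∧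
        z (piv j) = ((x (piv j) % g).toNat : ℤ) := by
      refine ⟨by omega, y, hyL, hyv, ?_⟩
      rw [hyp]; omega
    have := Nat.find_min (hgex MK piv h j) (show (x (piv j) % g).toNat < gnat MK piv h j by omega) 
    exact this hmem

lemma gen (MK : Matrix (Fin n) (Fin m) ℤ) (piv : Fin m → Fin n) (h : IsHNF MK piv)
    (q : Fin m → Fin n → ℤ)
    (hq : ∀ j, inL MK (q j) ∧ (∀ i, piv j < i → q j i = 0) ∧ q j (piv j) = (gnat MK piv h j : ℤ)) :
    ∀ J : ℕ, ∀ x, inL MK x → (∀ i, (∀ k : Fin m, (k : ℕ) < J → piv k < i) → x i = 0) →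
      ∃ c : Fin m → ℤ, (∀ k : Fin m, J ≤ (k : ℕ) → c k = 0) ∧ ∀ i, x i = ∑ k, c k * q k i := by
  intro J
  induction J with
  | zero =>
    intro x _ h0
    refine ⟨0, fun k _ => rfl, fun i => ?_⟩
    rw [h0 i (fun k hk => absurd hk (by omega))]
    simp
  | succ j ih =>
    intro x hx h0
    by_cases hjm : j < m
    · set jF : Fin m := ⟨j, hjm⟩ with hjF
      have hvan : ∀ i, piv jF < i → x i = 0 := by
        intro i hi
        apply h0
        intro k hk
        exact lt_of_le_of_lt (h.1.monotone (show k ≤ jF from by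
          rw [Fin.le_def]; simp [hjF]; omega)) hi
      obtain ⟨a, ha⟩ := g_dvd MK piv h jF hx hvan
      set y : Fin n → ℤ := fun i => x i - a * q jF i with hy
      have hyL : inL MK y := inL_sub_smul a hx (hq jF).1
      have hyv : ∀ i, piv jF < i → y i = 0 := by
        intro i hi; simp only [hy]; rw [hvan i hi, (hq jF).2.1 i hi]; ring
      have hyp : y (piv jF) = 0 := by
        simp only [hy]; rw [(hq jF).2.2, ha]; ring
      obtain ⟨cy, hcy⟩ := id hyL
      have hstep := vanish_step MK piv h hcy jF hyv hyp
      have h0y : ∀ i, (∀ k : Fin m, (k : ℕ) < j → piv k < i) → y i = 0 := by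
        intro i hi
        exact hstep i (by simpa [hjF] using hi)
      obtain ⟨c', hc'0, hc'⟩ := ih y hyL h0y
      refine ⟨fun k => if k = jF then c' k + a else c' k, ?_, ?_⟩
      · intro k hk
        have hne : k ≠ jF := by
          intro hkk; rw [hkk] at hk; simp [hjF] at hk
        show (if k = jF then c' k + a else c' k) = 0
        rw [if_neg hne]
        exact hc'0 k (by omega)
      · intro i
        have hxi : x i = y i + a * q jF i := by simp [hy]
        rw [hxi, hc' i]
        rw [Finset.sum_congr rfl (fun k _ => show
          (if k = jF then c' k + a else c' k) * q k i
            = c' k * q k i + (if k = jF then a else 0) * q k i from by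
          by_cases hkk : k = jF <;> simp [hkk] <;> ring)]
        rw [Finset.sum_add_distrib]
        congr 1
        rw [Finset.sum_congr rfl (fun k _ => show
          (if k = jF then a else 0) * q k i = if k = jF then a * q jF i else 0 from by
          by_cases hkk : k = jF <;> simp [hkk])]
        simp [Finset.sum_ite_eq']
    · -- j ≥ m : hypotheses at level j and j+1 coincide
      obtain ⟨c', hc'0, hc'⟩ := ih x hx (fun i hi => h0 i (fun k _ => hi k (by omega)))
      exact ⟨c', fun k hk => hc'0 k (by omega), hc'⟩

lemma reduce (MK : Matrix (Fin n) (Fin m) ℤ) (piv : Fin m → Fin n) (h : IsHNF MK piv)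
    (j : Fin m) :
    ∃ x, inL MK x ∧ (∀ i, piv j < i → x i = 0) ∧ x (piv j) = (gnat MK piv h j : ℤ) ∧
      ∀ k : Fin m, k < j → 0 ≤ x (piv k) ∧ x (piv k) < (gnat MK piv h k : ℤ) := by
  have key : ∀ s : ℕ, ∃ x, inL MK x ∧ (∀ i, piv j < i → x i = 0) ∧
      x (piv j) = (gnat MK piv h j : ℤ) ∧
      ∀ k : Fin m, k < j → (j : ℕ) ≤ (k : ℕ) + s →
        0 ≤ x (piv k) ∧ x (piv k) < (gnat MK piv h k : ℤ) := by
    intro s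
    induction s with
    | zero =>
      refine ⟨pw MK piv h j, (pw_spec MK piv h j).1, (pw_spec MK piv h j).2.1,
        (pw_spec MK piv h j).2.2, ?_⟩
      intro k hk hk2
      rw [Fin.lt_def] at hk
      omega
    | succ s ihs =>
      obtain ⟨x, hxL, hxv, hxp, hxr⟩ := ihs
      by_cases hs : (j : ℕ) ≤ s
      · exact ⟨x, hxL, hxv, hxp, fun k hk _ => hxr k hk (by omega)⟩
      · have hsj : s < (j : ℕ) := by omega
        set t : ℕ := (j : ℕ) - s - 1 with ht
        have htj : t < (j : ℕ) := by omega
        set tF : Fin m := ⟨t, lt_trans htj j.isLt⟩ with htF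
        have htFj : tF < j := by rw [Fin.lt_def]; simpa [htF]
        have hpivtj : piv tF < piv j := h.1 htFj
        set g : ℤ := (gnat MK piv h tF : ℤ) with hgdef
        have hgpos : 0 < g := by have := gnat_pos MK piv h tF; omega
        obtain ⟨hwL, hwv, hwp⟩ := pw_spec MK piv h tF
        set y : Fin n → ℤ := fun i => x i - (x (piv tF) / g) * pw MK piv h tF i with hy
        refine ⟨y, inL_sub_smul _ hxL hwL, ?_, ?_, ?_⟩
        · intro i hi
          simp only [hy]
          rw [hxv i hi, hwv i (lt_trans hpivtj hi)]; ring
        · simp only [hy]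
          rw [hxp, hwv _ hpivtj]; ring
        · intro k hk hk2
          rcases lt_trichotomy (t : ℕ) (k : ℕ) with hlt | heq | hgt
          · have : piv tF < piv k := h.1 (by rw [Fin.lt_def]; simpa [htF])
            have hyk : y (piv k) = x (piv k) := by
              simp only [hy]; rw [hwv _ this]; ring
            rw [hyk]
            exact hxr k hk (by omega)
          · have hktF : k = tF := Fin.ext (by simp [htF, heq.symm])
            have hyk : y (piv k) = x (piv tF) % g := by
              rw [hktF]
              simp only [hy]
              rw [hwp, ← hgdef, Int.emod_def]; ring
            rw [hyk, hktF]
            exact ⟨Int.emod_nonneg _ hgpos.ne', Int.emod_lt_of_pos _ hgpos⟩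
          · exfalso
            rw [Fin.lt_def] at hk
            omega
  obtain ⟨x, h1, h2, h3, h4⟩ := key m
  exact ⟨x, h1, h2, h3, fun k hk => h4 k hk (by have := j.isLt; omega)⟩

lemma pivotRow (B : Matrix (Fin n) (Fin m) ℤ) (piv : Fin m → Fin n) (hB : IsHNF B piv)
    (c : Fin m → ℤ) (j : Fin m) (hc : ∀ l : Fin m, (j : ℕ) < (l : ℕ) → c l = 0) :
    B.mulVec c (piv j) = B (piv j) j * c j := by
  simp only [Matrix.mulVec, dotProduct]
  apply Finset.sum_eq_single j
  · intro l _ hl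
    rcases lt_or_gt_of_ne hl with hlt | hgt
    · rw [hB.2.1 l (piv j) (hB.1 hlt), zero_mul]
    · rw [hc l (by exact_mod_cast hgt), mul_zero]
  · intro hj'; exact absurd (Finset.mem_univ j) hj'

lemma hnf_unique (A B : Matrix (Fin n) (Fin m) ℤ) (piv : Fin m → Fin n)
    (hA : IsHNF A piv) (hB : IsHNF B piv)
    (hab : ∀ j, ∃ c : Fin m → ℤ, (fun i => A i j) = B.mulVec c)
    (hba : ∀ j, ∃ c : Fin m → ℤ, (fun i => B i j) = A.mulVec c) : A = B := by
  classical
  choose cA hcA using hab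
  choose cB hcB using hba
  have hAz : ∀ j : Fin m, ∀ k : Fin m, (j : ℕ) + 1 ≤ (k : ℕ) → cA j k = 0 := fun j =>
    hnf_profileZ B piv hB (hcA j) ((j : ℕ) + 1)
      (fun i hi => hA.2.1 j i (hi j (by omega)))
  have hBz : ∀ j : Fin m, ∀ k : Fin m, (j : ℕ) + 1 ≤ (k : ℕ) → cB j k = 0 := fun j =>
    hnf_profileZ A piv hA (hcB j) ((j : ℕ) + 1)
      (fun i hi => hB.2.1 j i (hi j (by omega)))
  have hrowA : ∀ j, A (piv j) j = B (piv j) j * cA j j := by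
    intro j
    have := congrFun (hcA j) (piv j)
    rw [this, pivotRow B piv hB _ j (fun l hl => hAz j l (by omega))]
  have hrowB : ∀ j, B (piv j) j = A (piv j) j * cB j j := by
    intro j
    have := congrFun (hcB j) (piv j)
    rw [this, pivotRow A piv hA _ j (fun l hl => hBz j l (by omega))]
  have hcA1 : ∀ j, cA j j = 1 := by
    intro j
    have hApos := hA.2.2.1 j
    have hBpos := hB.2.2.1 j
    have h1 := hrowA j
    have h2 := hrowB j
    have hcApos : 0 < cA j j := by nlinarith
    have hcBpos : 0 < cB j j := by nlinarith
    have hmul : cA j j * cB j j = 1 := by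
      have : A (piv j) j * 1 = A (piv j) j * (cB j j * cA j j) := by
        rw [mul_one]; nlinarith
      have := mul_left_cancel₀ hApos.ne' this
      linarith [this]
    refine le_antisymm ?_ (by omega)
    nlinarith
  have hpiveq : ∀ j, A (piv j) j = B (piv j) j := by
    intro j; rw [hrowA j, hcA1 j, mul_one]
  have hcol : ∀ j i, A i j = B i j := by
    intro j
    set e : Fin m → ℤ := fun k => cA j k - (if k = j then 1 else 0) with he
    have he0 : ∀ k : Fin m, (j : ℕ) ≤ (k : ℕ) → e k = 0 := by
      intro k hk
      rcases eq_or_lt_of_le hk with heq | hgt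
      · have : k = j := Fin.ext heq.symm
        simp [he, this, hcA1 j]
      · have hne : k ≠ j := by intro hkk; rw [hkk] at hgt; omega
        simp [he, hne, hAz j k (by omega)]
    have hBe : ∀ i, A i j - B i j = B.mulVec e i := by
      intro i
      have h1 := congrFun (hcA j) i
      have : B.mulVec e i = B.mulVec (cA j) i - B i j := by
        have : B.mulVec e = B.mulVec (cA j) - B.mulVec (fun k => if k = j then 1 else 0) := by
          rw [← Matrix.mulVec_sub]; rfl
        rw [this]
        have hdelta : B.mulVec (fun k => if k = j then 1 else 0) i = B i j := by
          simp [Matrix.mulVec, dotProduct, Finset.sum_ite_eq']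
        simp [hdelta]
      rw [this, ← h1]
    have heall : ∀ k, e k = 0 := by
      by_contra hcon
      push_neg at hcon
      obtain ⟨k, hk⟩ := hcon
      set Fs : Finset (Fin m) := Finset.univ.filter (fun k => e k ≠ 0) with hFs
      have hne : Fs.Nonempty := ⟨k, by simp [hFs, hk]⟩
      set k0 := Fs.max' hne with hk0
      have hk0mem : k0 ∈ Fs := Fs.max'_mem hne
      rw [hFs, Finset.mem_filter] at hk0mem
      have hk0j : (k0 : ℕ) < (j : ℕ) := by
        by_contra hge
        exact hk0mem.2 (he0 k0 (by omega))
      have hk0ltj : k0 < j := by rw [Fin.lt_def]; exact hk0j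
      have hrow := hBe (piv k0)
      have hsum : B.mulVec e (piv k0) = B (piv k0) k0 * e k0 := by
        apply pivotRow B piv hB e k0
        intro l hl
        by_contra hel
        have hlmem : l ∈ Fs := by rw [hFs, Finset.mem_filter]; exact ⟨Finset.mem_univ _, hel⟩
        have hle := Fs.le_max' l hlmem
        rw [← hk0] at hle
        rw [Fin.le_def] at hle
        omega
      rw [hsum] at hrow
      have hAb := hA.2.2.2 k0 j hk0ltj
      have hBb := hB.2.2.2 k0 j hk0ltj
      have hpe := hpiveq k0
      have hBpos := hB.2.2.1 k0
      rcases lt_or_gt_of_ne hk0mem.2 with hneg | hpos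
      · nlinarith
      · nlinarith
    intro i
    have := hBe i
    have hz : B.mulVec e i = 0 := by
      have : e = 0 := funext heall
      rw [this, Matrix.mulVec_zero]; rfl
    omega
  exact Matrix.ext (fun i j => hcol j i)

end HNF

theorem stmt5 {n m : ℕ} (MK : Matrix (Fin n) (Fin m) ℤ) (piv : Fin m → Fin n)
    (h : IsHNF MK piv) :
    ∃! PF : Matrix (Fin n) (Fin m) ℤ × Matrix (Fin m) (Fin m) ℤ,
      IsHNF PF.1 piv ∧ GeneratesPrimitive PF.1 ∧
      (∀ i j : Fin m, j < i → PF.2 i j = 0) ∧ (∀ i, 0 < PF.2 i i) ∧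
      MK = PF.1 * PF.2 := by
  classical
  set p : Fin m → Fin n → ℤ := fun j => (reduce MK piv h j).choose with hp
  have hps : ∀ j, inL MK (p j) ∧ (∀ i, piv j < i → p j i = 0) ∧
      p j (piv j) = (gnat MK piv h j : ℤ) ∧
      ∀ k : Fin m, k < j → 0 ≤ p j (piv k) ∧ p j (piv k) < (gnat MK piv h k : ℤ) :=
    fun j => (reduce MK piv h j).choose_spec
  set MP : Matrix (Fin n) (Fin m) ℤ := Matrix.of (fun i j => p j i) with hMP
  have hMPapp : ∀ i j, MP i j = p j i := fun i j => rfl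
  have hMPhnf : IsHNF MP piv := by
    refine ⟨h.1, ?_, ?_, ?_⟩
    · intro j i hi; exact (hps j).2.1 i hi
    · intro j; rw [hMPapp, (hps j).2.2.1]
      exact_mod_cast gnat_pos MK piv h j
    · intro j l hjl
      have hb := (hps l).2.2.2 j hjl
      refine ⟨hb.1, ?_⟩
      rw [hMPapp, hMPapp, (hps j).2.2.1]
      exact hb.2
  -- MP generates L
  have hgen : ∀ x, inL MK x → ∃ c : Fin m → ℤ, x = MP.mulVec c := by
    intro x hx
    have hvan : ∀ i, (∀ k : Fin m, (k : ℕ) < m → piv k < i) → x i = 0 := by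
      intro i hi
      obtain ⟨c, hc⟩ := hx
      exact vanish_top MK piv h hc i (fun k => hi k k.isLt)
    obtain ⟨c, _, hc⟩ := gen MK piv h p
      (fun j => ⟨(hps j).1, (hps j).2.1, (hps j).2.2.1⟩) m x hx hvan
    refine ⟨c, funext fun i => ?_⟩
    rw [hc i]
    simp only [Matrix.mulVec, dotProduct, hMPapp]
    exact Finset.sum_congr rfl (fun k _ => mul_comm _ _)
  -- MP is primitive
  have hprim : GeneratesPrimitive MP := by
    intro x hx
    apply hgen x
    obtain ⟨c, hc⟩ := hx
    have hcw : ∀ k : Fin m, ∃ w : Fin m → ℝ,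
        (fun i => ((p k i : ℝ))) = (MK.map (Int.cast : ℤ → ℝ)).mulVec w := fun k => (hps k).1
    choose cw hcw using hcw
    refine ⟨fun l => ∑ k, c k * cw k l, ?_⟩
    funext i
    have h1 := congrFun hc i
    rw [h1]
    simp only [Matrix.mulVec, dotProduct, Matrix.map_apply, Matrix.of_apply]
    have hterm : ∀ k : Fin m, ((p k i : ℝ)) * c k = (∑ l, (MK i l : ℝ) * cw k l) * c k := by
      intro k
      rw [congrFun (hcw k) i]
      simp only [Matrix.mulVec, dotProduct, Matrix.map_apply]
    calc ∑ k, ((MP i k : ℤ) : ℝ) * c k = ∑ k, (∑ l, (MK i l : ℝ) * cw k l) * c k := by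
            exact Finset.sum_congr rfl (fun k _ => hterm k)
      _ = ∑ k, ∑ l, (MK i l : ℝ) * cw k l * c k := by
            exact Finset.sum_congr rfl (fun k _ => Finset.sum_mul _ _ _)
      _ = ∑ l, ∑ k, (MK i l : ℝ) * cw k l * c k := Finset.sum_comm
      _ = ∑ l, (MK i l : ℝ) * ∑ k, c k * cw k l := by
            refine Finset.sum_congr rfl (fun l _ => ?_)
            rw [Finset.mul_sum]
            exact Finset.sum_congr rfl (fun k _ => by ring)
  -- construct F
  have hcols : ∀ j, ∃ f : Fin m → ℤ, (fun i => MK i j) = MP.mulVec f :=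
    fun j => hgen _ (inL_col j)
  choose f hf using hcols
  set F : Matrix (Fin m) (Fin m) ℤ := Matrix.of (fun k j => f j k) with hF
  have hFapp : ∀ k j, F k j = f j k := fun k j => rfl
  have hFz : ∀ i j : Fin m, j < i → F i j = 0 := by
    intro i j hji
    rw [hFapp]
    exact hnf_profileZ MP piv hMPhnf (hf j) ((j : ℕ) + 1)
      (fun i' hi' => h.2.1 j i' (hi' j (by omega))) i
      (by rw [Fin.lt_def] at hji; omega)
  have hMKF : MK = MP * F := by
    ext i j
    rw [Matrix.mul_apply]
    have h1 := congrFun (hf j) i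
    rw [h1]
    simp only [Matrix.mulVec, dotProduct, hFapp]
  have hFd : ∀ j, 0 < F j j := by
    intro j
    have h1 := congrFun (hf j) (piv j)
    rw [pivotRow MP piv hMPhnf (f j) j
      (fun l hl => by rw [← hFapp]; exact hFz l j (by rw [Fin.lt_def]; omega))] at h1
    have h2 := h.2.2.1 j
    have h3 := hMPhnf.2.2.1 j
    rw [hFapp]
    nlinarith
  refine ⟨⟨MP, F⟩, ⟨hMPhnf, hprim, hFz, hFd, hMKF⟩, ?_⟩
  rintro ⟨Q, G⟩ ⟨hQ, hQprim, hGz, hGd, hQG⟩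
  simp only [] at hQ hQprim hGz hGd hQG
  set Gr : Matrix (Fin m) (Fin m) ℝ := G.map (Int.cast : ℤ → ℝ) with hGr
  have hGrtri : Gr.BlockTriangular id := by
    intro i j hij
    simp only [hGr, Matrix.map_apply]
    rw [hGz i j hij]; exact Int.cast_zero
  have hdet : Gr.det = ∏ i, Gr i i := Matrix.det_of_upperTriangular hGrtri
  have hdpos : (0 : ℝ) < Gr.det := by
    rw [hdet]
    apply Finset.prod_pos
    intro i _
    simp only [hGr, Matrix.map_apply]
    exact_mod_cast hGd i
  have hunit : IsUnit Gr.det := isUnit_iff_ne_zero.mpr hdpos.ne'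
  have hmapmul : (MK.map (Int.cast : ℤ → ℝ)) = (Q.map (Int.cast : ℤ → ℝ)) * Gr := by
    rw [hQG]
    ext i j
    simp only [Matrix.map_apply, Matrix.mul_apply, hGr]
    push_cast
    rfl
  have hQr : (Q.map (Int.cast : ℤ → ℝ)) = (MK.map (Int.cast : ℤ → ℝ)) * Gr⁻¹ := by
    rw [hmapmul]
    exact (Matrix.mul_nonsing_inv_cancel_right _ _ hunit).symm
  have hQL : ∀ j, inL MK (fun i => Q i j) := by
    intro j
    refine ⟨fun k => Gr⁻¹ k j, ?_⟩
    funext i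
    have h1 := congrFun (congrFun hQr i) j
    simp only [Matrix.map_apply] at h1
    rw [h1, Matrix.mul_apply]
    simp only [Matrix.mulVec, dotProduct, Matrix.map_apply]
  have hMPQ : ∀ j, ∃ c : Fin m → ℤ, (fun i => MP i j) = Q.mulVec c := by
    intro j
    apply hQprim
    obtain ⟨c, hc⟩ := (hps j).1
    refine ⟨Gr.mulVec c, ?_⟩
    funext i
    have h1 := congrFun hc i
    rw [show ((MP i j : ℤ) : ℝ) = ((p j i : ℝ)) from rfl, h1,
      Matrix.mulVec_mulVec, ← hmapmul]
  have hQMP : ∀ j, ∃ c : Fin m → ℤ, (fun i => Q i j) = MP.mulVec c :=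
    fun j => hgen _ (hQL j)
  have hQeq : Q = MP := hnf_unique Q MP piv hQ hMPhnf hQMP hMPQ
  have hGF : G = F := by
    have hMPG : MK = MP * G := by rw [hQG, hQeq]
    have hcoleq : ∀ j, MP.mulVec (fun k => G k j) = MP.mulVec (fun k => F k j) := by
      intro j
      funext i
      have e1 : MP.mulVec (fun k => G k j) i = (MP * G) i j := by
        simp only [Matrix.mulVec, dotProduct, Matrix.mul_apply]
      have e2 : MP.mulVec (fun k => F k j) i = (MP * F) i j := by
        simp only [Matrix.mulVec, dotProduct, Matrix.mul_apply]
      rw [e1, e2, ← hMPG, ← hMKF]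
    ext k j
    have := congrFun (hnf_mulVec_inj MP piv hMPhnf (hcoleq j)) k
    exact this
  simp only [Prod.mk.injEq]
  exact ⟨hQeq, hGF⟩
end

section
/- Let M be an n-by-(a-1) integer matrix whose columns are in Hermite normal form and generate a primitive sublattice K_{a-1} of Z^n with pivot rows i_1 < ... < i_{a-1}. Fix i_a with i_{a-1} < i_a <= n, and let tilde-K be the lattice generated by the first i_a rows of M. Let pi project onto the orthogonal complement of span(tilde-K) in R^{i_a}. Then the map v -> pi(v) is a bijection between the set of integer vectors v in Z^{i_a} satisfying 0 <= v_{i_j} < M_{i_j, j} for all j < a, and the points of the factor lattice Z^{i_a}/tilde-K. -/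
open scoped BigOperators

theorem stmt7 {n m ia : ℕ} (M : Matrix (Fin n) (Fin m) ℤ) (piv : Fin m → Fin n)
    (hH : IsHNF M piv) (hprim : GeneratesPrimitive M)
    (hia : ia ≤ n) (hpiv : ∀ j, (piv j : ℕ) < ia)
    (W : Submodule ℝ (Fin ia → ℝ))
    (hW : W = Submodule.span ℝ
      {v : Fin ia → ℝ | ∃ j : Fin m, v = fun i => (M (Fin.castLE hia i) j : ℝ)})
    (π : (Fin ia → ℝ) →ₗ[ℝ] (Fin ia → ℝ))
    (hπ : ∀ x, (∀ v ∈ W, dotp (π x) v = 0) ∧ x - π x ∈ W)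
    (S : Set (Fin ia → ℝ))
    (hS : S = {v : Fin ia → ℝ | (∀ i, ∃ z : ℤ, v i = (z : ℝ)) ∧
        ∀ j : Fin m, 0 ≤ v ⟨piv j, hpiv j⟩ ∧ v ⟨piv j, hpiv j⟩ < (M (piv j) j : ℝ)})
    (T : Set (Fin ia → ℝ))
    (hT : T = π '' {x : Fin ia → ℝ | ∀ i, ∃ z : ℤ, x i = (z : ℝ)}) :
    Set.BijOn (fun v => π v) S T := by
  obtain ⟨hSM, hbelow, hpos, hred⟩ := hH
  -- the pivot rows as elements of `Fin ia`
  set e : Fin m → Fin ia := fun j => ⟨piv j, hpiv j⟩ with he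
  -- positive definiteness of dotp
  have dself : ∀ v : Fin ia → ℝ, dotp v v = 0 → v = 0 := by
    intro v hv
    funext i
    simp only [dotp] at hv
    have h := (Finset.sum_eq_zero_iff_of_nonneg
      (fun i _ => mul_self_nonneg (v i))).mp hv i (Finset.mem_univ i)
    simpa using mul_self_eq_zero.mp h
  -- membership in W
  have hset : {v : Fin ia → ℝ | ∃ j : Fin m, v = fun i => (M (Fin.castLE hia i) j : ℝ)}
      = Set.range (fun j : Fin m => fun i : Fin ia => (M (Fin.castLE hia i) j : ℝ)) := by
    ext v; simp [Set.range, eq_comm]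
  have memW : ∀ v : Fin ia → ℝ, v ∈ W ↔
      ∃ c : Fin m → ℝ, v = fun i => ∑ l, (M (Fin.castLE hia i) l : ℝ) * c l := by
    intro v
    rw [hW, hset, Submodule.mem_span_range_iff_exists_fun]
    constructor
    · rintro ⟨c, hc⟩
      refine ⟨c, ?_⟩
      rw [← hc]; funext i
      simp [Finset.sum_apply, mul_comm]
    · rintro ⟨c, hc⟩
      refine ⟨c, ?_⟩
      rw [hc]; funext i
      simp [Finset.sum_apply, mul_comm]
  -- π kills W
  have hker : ∀ u, u ∈ W → π u = 0 := by
    intro u hu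
    have h1 := (hπ u).1
    have h2 := (hπ u).2
    have hπu : π u ∈ W := by
      have := Submodule.sub_mem W hu h2
      simpa using this
    exact dself _ (h1 _ hπu)
  -- key equivalence
  have hproj : ∀ x y : Fin ia → ℝ, π x = π y ↔ (x - y) ∈ W := by
    intro x y
    constructor
    · intro h
      have hx := (hπ x).2
      have hy := (hπ y).2
      have hxy : x - y = (x - π x) - (y - π y) := by rw [h]; abel
      rw [hxy]; exact Submodule.sub_mem W hx hy
    · intro h
      have h0 : π (x - y) = 0 := hker _ h
      rw [map_sub] at h0
      exact sub_eq_zero.mp h0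
  -- primitivity transfer to the truncated lattice
  have prim' : ∀ z : Fin ia → ℤ, (fun i => (z i : ℝ)) ∈ W →
      ∃ c : Fin m → ℤ, ∀ i, z i = ∑ l, M (Fin.castLE hia i) l * c l := by
    intro z hz
    obtain ⟨creal, hcr⟩ := (memW _).mp hz
    set zext : Fin n → ℤ := fun i => if h : (i : ℕ) < ia then z ⟨i, h⟩ else 0 with hzext
    have hhyp : ∃ cr : Fin m → ℝ,
        (fun i => ((zext i : ℤ) : ℝ)) = (M.map (Int.cast : ℤ → ℝ)).mulVec cr := by
      refine ⟨creal, ?_⟩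
      funext i
      by_cases h : (i : ℕ) < ia
      · have h1 := congrFun hcr ⟨(i : ℕ), h⟩
        have hcast : Fin.castLE hia (⟨(i : ℕ), h⟩ : Fin ia) = i := by
          apply Fin.ext; rfl
        simp only [hzext, dif_pos h]
        rw [h1, hcast]
        simp [Matrix.mulVec, dotProduct]
      · have hz0 : zext i = 0 := by simp [hzext, h]
        have hrow : ∀ l : Fin m, M i l = 0 := by
          intro l
          apply hbelow l i
          have : (piv l : ℕ) < (i : ℕ) := lt_of_lt_of_le (hpiv l) (le_of_not_gt h)
          exact this
        simp [hz0, Matrix.mulVec, dotProduct, hrow]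
    obtain ⟨c, hc⟩ := hprim zext hhyp
    refine ⟨c, fun i => ?_⟩
    have h1 := congrFun hc (Fin.castLE hia i)
    have hlt : ((Fin.castLE hia i : Fin n) : ℕ) < ia := i.isLt
    have h2 : zext (Fin.castLE hia i) = z i := by
      simp only [hzext, dif_pos hlt]
      congr 1
    rw [h2] at h1
    rw [h1]
    simp [Matrix.mulVec, dotProduct]
  -- uniqueness: small vectors in the lattice are zero
  have hzero : ∀ c : Fin m → ℤ,
      (∀ j : Fin m, -(M (piv j) j) < ∑ l, M (piv j) l * c l ∧
        ∑ l, M (piv j) l * c l < M (piv j) j) → ∀ j, c j = 0 := by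
    intro c hc
    by_contra hne
    push_neg at hne
    obtain ⟨j1, hj1⟩ := hne
    set F := Finset.univ.filter (fun j => c j ≠ 0) with hF
    have hFne : F.Nonempty := ⟨j1, by simp [hF, hj1]⟩
    set j0 := F.max' hFne with hj0def
    have hj0 : c j0 ≠ 0 := (Finset.mem_filter.mp (F.max'_mem hFne)).2
    have hsum : ∑ l, M (piv j0) l * c l = M (piv j0) j0 * c j0 := by
      apply Finset.sum_eq_single
      · intro l _ hlne
        rcases lt_or_gt_of_ne hlne with h | h
        · have : M (piv j0) l = 0 := hbelow l (piv j0) (hSM h)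
          rw [this, zero_mul]
        · have : c l = 0 := by
            by_contra h0
            exact absurd (F.le_max' l (by simp [hF, h0])) (not_le.mpr h)
          rw [this, mul_zero]
      · intro h; exact absurd (Finset.mem_univ j0) h
    have hd := hpos j0
    have h1 : 1 ≤ |c j0| := Int.one_le_abs hj0
    have habs : |M (piv j0) j0 * c j0| < M (piv j0) j0 := by
      rw [← hsum]
      exact abs_lt.mpr (hc j0)
    rw [abs_mul, abs_of_pos hd] at habs
    nlinarith
  -- existence: reduction into the box
  have key : ∀ (x : Fin ia → ℤ) (k : ℕ), ∃ c : Fin m → ℤ,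
      (∀ j : Fin m, (j : ℕ) < m - k → c j = 0) ∧
      ∀ j : Fin m, m - k ≤ (j : ℕ) →
        0 ≤ x (e j) - ∑ l, M (piv j) l * c l ∧
        x (e j) - ∑ l, M (piv j) l * c l < M (piv j) j := by
    intro x k
    induction k with
    | zero =>
      refine ⟨0, fun j _ => rfl, fun j hj => ?_⟩
      exact absurd hj (by omega)
    | succ k ih =>
      obtain ⟨c, hc0, hcbox⟩ := ih
      by_cases hk : k < m
      · have hlt : m - (k + 1) < m := by omega
        set j0 : Fin m := ⟨m - (k + 1), hlt⟩ with hj0def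
        set d := M (piv j0) j0 with hd
        set q := x (e j0) - ∑ l, M (piv j0) l * c l with hq
        set c' : Fin m → ℤ := Function.update c j0 (q / d) with hc'
        have hval : (j0 : ℕ) = m - (k + 1) := rfl
        have hcj0 : c j0 = 0 := hc0 j0 (by omega)
        have hc'eq : ∀ l, c' l = c l + (if l = j0 then q / d else 0) := by
          intro l
          by_cases h : l = j0
          · subst h; simp [hc', hcj0]
          · simp [hc', h]
        have hsum' : ∀ j : Fin m, ∑ l, M (piv j) l * c' l =
            (∑ l, M (piv j) l * c l) + M (piv j) j0 * (q / d) := by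
          intro j
          simp only [hc'eq, mul_add, Finset.sum_add_distrib, mul_ite, mul_zero]
          rw [Finset.sum_ite_eq' Finset.univ j0 (fun l => M (piv j) l * (q / d))]
          simp
        refine ⟨c', ?_, ?_⟩
        · intro j hj
          have hne : j ≠ j0 := by
            intro h
            rw [h] at hj
            omega
          rw [hc'eq, if_neg hne, add_zero]
          exact hc0 j (by omega)
        · intro j hj
          by_cases hjj : j = j0
          · subst hjj
            rw [hsum']
            have hd' : M (piv j0) j0 = d := rfl
            rw [hd']
            have hdpos : 0 < d := hpos j0
            have h5 := Int.mul_ediv_add_emod q d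
            have hmod1 : 0 ≤ q % d := Int.emod_nonneg q (ne_of_gt hdpos)
            have hmod2 : q % d < d := Int.emod_lt_of_pos q hdpos
            constructor <;> linarith [hq, h5, hmod1, hmod2]
          · have hjgt : (j0 : ℕ) < (j : ℕ) := by
              have h1 : (j : ℕ) ≠ (j0 : ℕ) := fun h => hjj (Fin.ext h)
              omega
            have hMj0 : M (piv j) j0 = 0 :=
              hbelow j0 (piv j) (hSM (show j0 < j from hjgt))
            rw [hsum', hMj0, zero_mul, add_zero]
            exact hcbox j (by omega)
      · have heq : m - (k + 1) = m - k := by omega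
        exact ⟨c, fun j hj => hc0 j (by omega), fun j hj => hcbox j (by omega)⟩
  -- now assemble
  refine ⟨?_, ?_, ?_⟩
  · -- MapsTo
    intro v hv
    rw [hS] at hv
    rw [hT]
    exact ⟨v, hv.1, rfl⟩
  · -- InjOn
    intro x hx y hy hxy
    rw [hS] at hx hy
    obtain ⟨hxint, hxbox⟩ := hx
    obtain ⟨hyint, hybox⟩ := hy
    choose zx hzx using hxint
    choose zy hzy using hyint
    have hxyW : (fun i => ((zx i - zy i : ℤ) : ℝ)) ∈ W := by
      have : (fun i => ((zx i - zy i : ℤ) : ℝ)) = x - y := by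
        funext i; push_cast; rw [← hzx i, ← hzy i]; rfl
      rw [this]
      exact (hproj x y).mp hxy
    obtain ⟨c, hc⟩ := prim' _ hxyW
    have hcz : ∀ j, c j = 0 := by
      apply hzero
      intro j
      have hcj := hc (e j)
      have hcast : Fin.castLE hia (e j) = piv j := by apply Fin.ext; rfl
      rw [hcast] at hcj
      rw [← hcj]
      have hx1 := hxbox j
      have hy1 := hybox j
      have hzx1 := hzx (e j)
      have hzy1 := hzy (e j)
      have h1 : (0:ℝ) ≤ (zx (e j) : ℝ) := by rw [← hzx1]; exact hx1.1
      have h2 : (zx (e j) : ℝ) < (M (piv j) j : ℝ) := by rw [← hzx1]; exact hx1.2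
      have h3 : (0:ℝ) ≤ (zy (e j) : ℝ) := by rw [← hzy1]; exact hy1.1
      have h4 : (zy (e j) : ℝ) < (M (piv j) j : ℝ) := by rw [← hzy1]; exact hy1.2
      have h5 : (0:ℤ) ≤ zx (e j) := by exact_mod_cast h1
      have h6 : zx (e j) < M (piv j) j := by exact_mod_cast h2
      have h7 : (0:ℤ) ≤ zy (e j) := by exact_mod_cast h3
      have h8 : zy (e j) < M (piv j) j := by exact_mod_cast h4
      constructor <;> omega
    have hz0 : ∀ i, zx i - zy i = 0 := by
      intro i
      rw [hc i]
      apply Finset.sum_eq_zero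
      intro l _
      rw [hcz l, mul_zero]
    funext i
    have := hz0 i
    have : zx i = zy i := by omega
    rw [hzx i, hzy i, this]
  · -- SurjOn
    intro t ht
    rw [hT] at ht
    obtain ⟨x0, hx0int, hx0⟩ := ht
    choose z hz using hx0int
    obtain ⟨c, _, hcbox⟩ := key z m
    set v : Fin ia → ℝ := fun i => ((z i - ∑ l, M (Fin.castLE hia i) l * c l : ℤ) : ℝ) with hv
    have hvS : v ∈ S := by
      rw [hS]
      constructor
      · intro i; exact ⟨_, rfl⟩
      · intro j
        have hcast : Fin.castLE hia (e j) = piv j := by apply Fin.ext; rfl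
        have hbox := hcbox j (by omega)
        constructor
        · show (0:ℝ) ≤ v (e j)
          simp only [hv]
          rw [hcast]
          exact_mod_cast hbox.1
        · show v (e j) < (M (piv j) j : ℝ)
          simp only [hv]
          rw [hcast]
          exact_mod_cast hbox.2
    refine ⟨v, hvS, ?_⟩
    have hdiff : x0 - v ∈ W := by
      rw [memW]
      refine ⟨fun l => (c l : ℝ), ?_⟩
      funext i
      simp only [Pi.sub_apply, hv]
      rw [hz i]
      push_cast
      ring
    have := (hproj x0 v).mpr hdiff
    rw [hx0] at this
    exact this.symm
end

section
/- Let L be a rank-n lattice in R^n and 1 <= m <= n. Then the volume of the m-th exterior power lattice satisfies vol(wedge^m L) = vol(L)^{binom(n-1, m-1)}. -/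
open scoped BigOperators

/-- Volume of the lattice generated by the columns of `B`. -/
noncomputable def latVol {d l : ℕ} (B : Matrix (Fin d) (Fin l) ℝ) : ℝ :=
  Real.sqrt (B.transpose * B).det

/-- Gram matrix of the `m`-th exterior power of the lattice with basis the
columns of `B`: entries are indexed by `m`-element subsets `s, t` of `Fin n`,
and equal the determinant of the corresponding minor of the Gram matrix of `B`. -/
noncomputable def extGram {n : ℕ} (B : Matrix (Fin n) (Fin n) ℝ) (m : ℕ) :
    Matrix {s : Finset (Fin n) // s.card = m} {s : Finset (Fin n) // s.card = m} ℝ :=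
  Matrix.of fun s t =>
    (Matrix.of fun (i j : Fin m) =>
      (B.transpose * B) (s.1.orderIsoOfFin s.2 i) (t.1.orderIsoOfFin t.2 j)).det

section SFsection
open Finset Equiv Equiv.Perm Matrix

namespace SF


variable {n m : ℕ}

/-- The increasing enumeration of an `m`-element subset of `Fin n`. -/
def emb (s : {s : Finset (Fin n) // s.card = m}) : Fin m → Fin n :=
  fun i => s.1.orderIsoOfFin s.2 i

lemma emb_injective (s : {s : Finset (Fin n) // s.card = m}) :
    Function.Injective (emb s) := fun i j h => by
  simpa [emb, Subtype.ext_iff] using (s.1.orderIsoOfFin s.2).injective (Subtype.ext h)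

lemma emb_mem (s : {s : Finset (Fin n) // s.card = m}) (i : Fin m) :
    emb s i ∈ s.1 := (s.1.orderIsoOfFin s.2 i).2

lemma image_emb (s : {s : Finset (Fin n) // s.card = m}) :
    Finset.image (emb s) Finset.univ = s.1 := by
  apply Finset.eq_of_subset_of_card_le
  · intro x hx
    simp only [Finset.mem_image] at hx
    obtain ⟨i, _, rfl⟩ := hx
    exact emb_mem s i
  · rw [Finset.card_image_of_injective _ (emb_injective s), Finset.card_univ,
      Fintype.card_fin, s.2]

lemma emb_inj_subtype : Function.Injective (fun s : {s : Finset (Fin n) // s.card = m} => emb s) := by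
  intro s t h
  simp only at h
  ext1
  rw [← image_emb s, ← image_emb t, h]

/-- Compound matrix: the matrix of `m×m` minors of `A`. -/
noncomputable def cpd (m : ℕ) (A : Matrix (Fin n) (Fin n) ℝ) :
    Matrix {s : Finset (Fin n) // s.card = m} {s : Finset (Fin n) // s.card = m} ℝ :=
  fun s t => (A.submatrix (emb s) (emb t)).det


local notation "ε" σ => ((Equiv.Perm.sign σ : ℤ) : ℝ)

lemma expand (P : Matrix (Fin m) (Fin n) ℝ) (Q : Matrix (Fin n) (Fin m) ℝ) :
    det (P * Q) = ∑ p : Fin m → Fin n, ∑ σ : Perm (Fin m),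
      (ε σ) * ∏ i, P (σ i) (p i) * Q (p i) i := by
  simp only [det_apply', Matrix.mul_apply, prod_univ_sum, mul_sum, Fintype.piFinset_univ]
  rw [Finset.sum_comm]

lemma sum_sign_eq_zero {P : Matrix (Fin m) (Fin n) ℝ} {Q : Matrix (Fin n) (Fin m) ℝ}
    {p : Fin m → Fin n} (H : ¬ Function.Injective p) :
    (∑ σ : Perm (Fin m), (ε σ) * ∏ x, P (σ x) (p x) * Q (p x) x) = 0 := by
  obtain ⟨i, j, hpij, hij⟩ : ∃ i j, p i = p j ∧ i ≠ j := by
    rw [Function.Injective] at H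
    push_neg at H
    obtain ⟨i, j, h1, h2⟩ := H
    exact ⟨i, j, h1, h2⟩
  exact Finset.sum_involution (fun σ _ => σ * Equiv.swap i j)
    (fun σ _ => by
      have : (∏ x, P (σ x) (p x)) = ∏ x, P ((σ * Equiv.swap i j) x) (p x) :=
        Fintype.prod_equiv (Equiv.swap i j) _ _ (by simp [Equiv.apply_swap_eq_self hpij])
      simp [this, Equiv.Perm.sign_swap hij, -Equiv.Perm.sign_swap', Finset.prod_mul_distrib])
    (fun σ _ _ => (not_congr Equiv.mul_swap_eq_iff).mpr hij) (fun _ _ => Finset.mem_univ _)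
    fun σ _ => Equiv.mul_swap_involutive i j σ

lemma det_mul_expand (M N : Matrix (Fin m) (Fin m) ℝ) :
    det M * det N = ∑ σ : Perm (Fin m), ∑ τ : Perm (Fin m),
      (ε τ) * ∏ i, M (τ i) (σ i) * N (σ i) i := by
  rw [← det_mul]
  calc
    det (M * N) = ∑ p : Fin m → Fin m, ∑ σ : Perm (Fin m),
        (ε σ) * ∏ i, M (σ i) (p i) * N (p i) i := expand M N
    _ = ∑ p ∈ Finset.univ.filter (fun p : Fin m → Fin m => Function.Injective p),
        ∑ σ : Perm (Fin m), (ε σ) * ∏ i, M (σ i) (p i) * N (p i) i := by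
      refine (Finset.sum_subset (Finset.filter_subset _ _) fun f _ hinj =>
        sum_sign_eq_zero ?_).symm
      simpa using hinj
    _ = ∑ σ : Perm (Fin m), ∑ τ : Perm (Fin m), (ε τ) * ∏ i, M (τ i) (σ i) * N (σ i) i :=
      Finset.sum_bij
        (fun p h => Equiv.ofBijective p
          (Finite.injective_iff_bijective.1 (Finset.mem_filter.1 h).2))
        (fun _ _ => Finset.mem_univ _)
        (fun _ _ _ _ h => by injection h)
        (fun b _ => ⟨b, Finset.mem_filter.2 ⟨Finset.mem_univ _, b.injective⟩,
          Equiv.coe_fn_injective rfl⟩)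
        (fun _ _ => rfl)

/-- The subset associated to an injective function. -/
def us (p : Fin m → Fin n) (hp : Function.Injective p) : {s : Finset (Fin n) // s.card = m} :=
  ⟨Finset.image p Finset.univ, by
    rw [Finset.card_image_of_injective _ hp, Finset.card_univ, Fintype.card_fin]⟩

/-- The permutation associated to an injective function. -/
noncomputable def permOf (p : Fin m → Fin n) (hp : Function.Injective p) : Perm (Fin m) :=
  Equiv.ofBijective
    (fun i => ((us p hp).1.orderIsoOfFin (us p hp).2).symm
      ⟨p i, by simp [us, Finset.mem_image]⟩)
    (Finite.injective_iff_bijective.1 (fun i j h => hp (by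
      have := congrArg (fun x => (((us p hp).1.orderIsoOfFin (us p hp).2) x : Fin n)) h
      simpa using this)))

lemma emb_us_permOf (p : Fin m → Fin n) (hp : Function.Injective p) (i : Fin m) :
    emb (us p hp) (permOf p hp i) = p i := by
  simp [emb, permOf, Equiv.ofBijective_apply]

theorem cauchyBinet (P : Matrix (Fin m) (Fin n) ℝ) (Q : Matrix (Fin n) (Fin m) ℝ) :
    det (P * Q) = ∑ u : {s : Finset (Fin n) // s.card = m},
      det (P.submatrix id (emb u)) * det (Q.submatrix (emb u) id) := by
  calc
    det (P * Q) = ∑ p : Fin m → Fin n, ∑ σ : Perm (Fin m),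
        (ε σ) * ∏ i, P (σ i) (p i) * Q (p i) i := expand P Q
    _ = ∑ p ∈ Finset.univ.filter (fun p : Fin m → Fin n => Function.Injective p),
        ∑ σ : Perm (Fin m), (ε σ) * ∏ i, P (σ i) (p i) * Q (p i) i := by
      refine (Finset.sum_subset (Finset.filter_subset _ _) fun f _ hinj =>
        sum_sign_eq_zero ?_).symm
      simpa using hinj
    _ = ∑ x : {s : Finset (Fin n) // s.card = m} × Perm (Fin m), ∑ σ : Perm (Fin m),
        (ε σ) * ∏ i, P (σ i) (emb x.1 (x.2 i)) * Q (emb x.1 (x.2 i)) i := by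
      refine Finset.sum_bij'
        (fun p hp => (us p (Finset.mem_filter.1 hp).2, permOf p (Finset.mem_filter.1 hp).2))
        (fun x _ => emb x.1 ∘ x.2) (fun _ _ => Finset.mem_univ _)
        (fun x _ => Finset.mem_filter.2 ⟨Finset.mem_univ _,
          (emb_injective x.1).comp x.2.injective⟩)
        ?_ ?_ ?_
      · intro p hp
        funext i
        exact emb_us_permOf p (Finset.mem_filter.1 hp).2 i
      · intro x _
        have hinj : Function.Injective (emb x.1 ∘ x.2) :=
          (emb_injective x.1).comp x.2.injective
        have hu : us (emb x.1 ∘ x.2) hinj = x.1 := by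
          apply Subtype.ext
          show Finset.image (emb x.1 ∘ x.2) Finset.univ = x.1.1
          rw [← image_emb x.1]
          ext y
          simp [Function.comp]
          constructor
          · rintro ⟨i, rfl⟩; exact ⟨x.2 i, rfl⟩
          · rintro ⟨i, rfl⟩; exact ⟨x.2.symm i, by simp⟩
        have hperm : ∀ i, permOf (emb x.1 ∘ x.2) hinj i = x.2 i := by
          intro i
          apply emb_injective x.1
          have h1 := emb_us_permOf (emb x.1 ∘ x.2) hinj i
          rw [hu] at h1
          exact h1
        exact Prod.ext hu (Equiv.ext hperm)
      · intro p hp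
        refine Finset.sum_congr rfl fun σ _ => ?_
        congr 1
        refine Finset.prod_congr rfl fun i _ => ?_
        rw [emb_us_permOf p (Finset.mem_filter.1 hp).2 i]
    _ = ∑ u : {s : Finset (Fin n) // s.card = m}, ∑ σ : Perm (Fin m), ∑ τ : Perm (Fin m),
        (ε τ) * ∏ i, P (τ i) (emb u (σ i)) * Q (emb u (σ i)) i := by
      rw [Fintype.sum_prod_type]
    _ = ∑ u : {s : Finset (Fin n) // s.card = m},
        det (P.submatrix id (emb u)) * det (Q.submatrix (emb u) id) := by
      refine Finset.sum_congr rfl fun u _ => ?_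
      rw [det_mul_expand]
      rfl



lemma cpd_mul (A B : Matrix (Fin n) (Fin n) ℝ) :
    cpd (n := n) m (A * B) = cpd m A * cpd m B := by
  ext s t
  show ((A * B).submatrix (emb s) (emb t)).det = _
  have h1 : (A * B).submatrix (emb s) (emb t)
      = (A.submatrix (emb s) id) * (B.submatrix id (emb t)) := by
    ext a b
    simp [Matrix.mul_apply, Matrix.submatrix_apply]
  rw [h1, cauchyBinet]
  simp [Matrix.mul_apply, cpd, Matrix.submatrix_submatrix, Function.comp]

lemma cpd_transpose (A : Matrix (Fin n) (Fin n) ℝ) :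
    cpd (n := n) m (A.transpose) = (cpd m A).transpose := by
  ext s t
  show ((A.transpose).submatrix (emb s) (emb t)).det = ((A.submatrix (emb t) (emb s))).det
  rw [← Matrix.det_transpose]
  congr 1

lemma card_filter_mem (hm1 : 1 ≤ m) (i : Fin n) :
    (Finset.univ.filter fun s : {s : Finset (Fin n) // s.card = m} => i ∈ s.1).card
      = (n - 1).choose (m - 1) := by
  have h := Finset.card_powersetCard (m - 1) ((Finset.univ : Finset (Fin n)).erase i)
  rw [Finset.card_erase_of_mem (Finset.mem_univ i), Finset.card_univ, Fintype.card_fin] at h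
  rw [← h]
  apply Finset.card_bij (fun s _ => s.1.erase i)
  · intro s hs
    have hi : i ∈ s.1 := (Finset.mem_filter.1 hs).2
    rw [Finset.mem_powersetCard]
    constructor
    · intro x hx
      rcases Finset.mem_erase.1 hx with ⟨hxne, hxs⟩
      exact Finset.mem_erase.2 ⟨hxne, Finset.mem_univ x⟩
    · rw [Finset.card_erase_of_mem hi, s.2]
  · intro s hs t ht hst
    have hi : i ∈ s.1 := (Finset.mem_filter.1 hs).2
    have hi' : i ∈ t.1 := (Finset.mem_filter.1 ht).2
    apply Subtype.ext
    rw [← Finset.insert_erase hi, ← Finset.insert_erase hi', hst]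
  · intro t ht
    rw [Finset.mem_powersetCard] at ht
    have hit : i ∉ t := fun hmem => by
      have := ht.1 hmem
      exact (Finset.mem_erase.1 this).1 rfl
    have hcard : (insert i t).card = m := by
      rw [Finset.card_insert_of_notMem hit, ht.2]
      omega
    refine ⟨⟨insert i t, hcard⟩, ?_, ?_⟩
    · exact Finset.mem_filter.2 ⟨Finset.mem_univ _, Finset.mem_insert_self i t⟩
    · simp [Finset.erase_insert hit]

lemma cpd_diagonal (d : Fin n → ℝ) :
    cpd (n := n) m (Matrix.diagonal d)
      = Matrix.diagonal (fun s : {s : Finset (Fin n) // s.card = m} => ∏ i ∈ s.1, d i) := by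
  ext s t
  show ((Matrix.diagonal d).submatrix (emb s) (emb t)).det = _
  rcases eq_or_ne s t with rfl | hst
  · rw [Matrix.diagonal_apply_eq]
    have : (Matrix.diagonal d).submatrix (emb s) (emb s)
        = Matrix.diagonal (fun i => d (emb s i)) := by
      ext a b
      rcases eq_or_ne a b with rfl | hab
      · simp
      · simp [Matrix.diagonal_apply_ne _ hab,
          Matrix.diagonal_apply_ne _ (fun h => hab (emb_injective s h))]
    rw [this, Matrix.det_diagonal, ← image_emb s, Finset.prod_image
      (fun a _ b _ h => emb_injective s h)]
  · rw [Matrix.diagonal_apply_ne _ hst]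
    -- s ≠ t : there is an element of s not in t, giving a zero row
    have hex : ∃ a, a ∈ s.1 ∧ a ∉ t.1 := by
      by_contra hc
      push_neg at hc
      exact hst (Subtype.ext (Finset.eq_of_subset_of_card_le hc (by rw [s.2, t.2])))
    obtain ⟨a, has, hat⟩ := hex
    rw [← image_emb s] at has
    obtain ⟨i0, _, hi0⟩ := Finset.mem_image.1 has
    apply Matrix.det_eq_zero_of_row_eq_zero i0
    intro j
    have : emb s i0 ≠ emb t j := by
      rw [hi0]
      intro h
      exact hat (h ▸ emb_mem t j)
    simp [Matrix.submatrix_apply, Matrix.diagonal_apply_ne _ this]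

lemma det_cpd_diagonal (hm1 : 1 ≤ m) (d : Fin n → ℝ) :
    (cpd (n := n) m (Matrix.diagonal d)).det
      = (∏ i, d i) ^ ((n - 1).choose (m - 1)) := by
  rw [cpd_diagonal, Matrix.det_diagonal]
  have h1 : ∀ s : {s : Finset (Fin n) // s.card = m},
      (∏ i ∈ s.1, d i) = ∏ i : Fin n, if i ∈ s.1 then d i else 1 := by
    intro s
    rw [← Finset.prod_filter]
    congr 1
    simp [Finset.filter_mem_eq_inter]
  calc (∏ s : {s : Finset (Fin n) // s.card = m}, ∏ i ∈ s.1, d i)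
      = ∏ s : {s : Finset (Fin n) // s.card = m}, ∏ i : Fin n,
          if i ∈ s.1 then d i else 1 := Finset.prod_congr rfl fun s _ => h1 s
    _ = ∏ i : Fin n, ∏ s : {s : Finset (Fin n) // s.card = m},
          if i ∈ s.1 then d i else 1 := Finset.prod_comm
    _ = (∏ i, d i) ^ ((n - 1).choose (m - 1)) := by
        rw [← Finset.prod_pow]
        refine Finset.prod_congr rfl fun i _ => ?_
        rw [Finset.prod_ite, Finset.prod_const, Finset.prod_const, one_pow, mul_one,
          card_filter_mem hm1 i]

lemma emb_strictMono (s : {s : Finset (Fin n) // s.card = m}) : StrictMono (emb s) :=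
  fun a b h => by
    have := (s.1.orderIsoOfFin s.2).strictMono h
    exact_mod_cast this

lemma det_eq_one_of_wt {ι : Type*} [DecidableEq ι] [Fintype ι] (M : Matrix ι ι ℝ)
    (w : ι → ℤ) (hd : ∀ s, M s s = 1)
    (h : ∀ s t, M s t ≠ 0 → s = t ∨ w s < w t) : M.det = 1 := by
  rw [Matrix.det_apply']
  rw [Finset.sum_eq_single (1 : Perm ι)]
  · simp [hd]
  · intro σ _ hσ
    have hz : (∏ s, M (σ s) s) = 0 := by
      by_contra hc
      have hc : ∀ x ∈ Finset.univ, M (σ x) x ≠ 0 := Finset.prod_ne_zero_iff.1 hc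
      have key : ∀ s : ι, w (σ s) < w s ∨ σ s = s := by
        intro s
        rcases h (σ s) s (hc s (Finset.mem_univ s)) with he | hlt
        · exact Or.inr he
        · exact Or.inl hlt
      obtain ⟨s0, hs0⟩ : ∃ s, σ s ≠ s := by
        by_contra hall
        push_neg at hall
        exact hσ (Equiv.ext hall)
      have hsum : ∑ s, w (σ s) < ∑ s, w s := by
        apply Finset.sum_lt_sum
        · intro s _
          rcases key s with hlt | he
          · exact hlt.le
          · rw [he]
        · exact ⟨s0, Finset.mem_univ s0, (key s0).resolve_right hs0⟩
      rw [Equiv.sum_comp σ w] at hsum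
      exact lt_irrefl _ hsum
    simp [hz]
  · simp

lemma transvection_apply_ne_zero {i j : Fin n} (c : ℝ) {x y : Fin n}
    (h : Matrix.transvection i j c x y ≠ 0) : x = y ∨ (x = i ∧ y = j) := by
  by_contra hc
  push_neg at hc
  apply h
  simp only [Matrix.transvection, Matrix.add_apply, Matrix.one_apply, Matrix.single,
    Matrix.of_apply]
  rw [if_neg hc.1, if_neg (fun hh : i = x ∧ j = y => hc.2 hh.1.symm hh.2.symm), add_zero]

lemma transvection_apply_diag {i j : Fin n} (hij : i ≠ j) (c : ℝ) (x : Fin n) :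
    Matrix.transvection i j c x x = 1 := by
  simp only [Matrix.transvection, Matrix.add_apply, Matrix.one_apply_eq, Matrix.single,
    Matrix.of_apply]
  rw [if_neg (fun hh : i = x ∧ j = x => hij (hh.1.trans hh.2.symm)), add_zero]

lemma det_cpd_transvection_lt {i j : Fin n} (hij : i < j) (c : ℝ) :
    (cpd (n := n) m (Matrix.transvection i j c)).det = 1 := by
  apply det_eq_one_of_wt _ (fun s : {s : Finset (Fin n) // s.card = m} => ∑ x ∈ s.1, (x : ℤ))
  · -- diagonal entries are 1
    intro s
    show ((Matrix.transvection i j c).submatrix (emb s) (emb s)).det = 1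
    apply det_eq_one_of_wt _ (fun a : Fin m => (a : ℤ))
    · intro a
      exact transvection_apply_diag hij.ne c _
    · intro a b hab
      rcases transvection_apply_ne_zero c hab with he | ⟨h1, h2⟩
      · exact Or.inl (emb_injective s he)
      · right
        have hlt : emb s a < emb s b := by rw [h1, h2]; exact hij
        exact_mod_cast (emb_strictMono s).lt_iff_lt.1 hlt
  · -- off-diagonal structure
    intro s t hst
    by_cases hseq : s = t
    · exact Or.inl hseq
    right
    -- no zero column, no zero row
    have hcol : ∀ b, ∃ a, Matrix.transvection i j c (emb s a) (emb t b) ≠ 0 := by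
      intro b
      by_contra hc
      push_neg at hc
      exact hst (Matrix.det_eq_zero_of_column_eq_zero b fun a => hc a)
    have hrow : ∀ a, ∃ b, Matrix.transvection i j c (emb s a) (emb t b) ≠ 0 := by
      intro a
      by_contra hc
      push_neg at hc
      exact hst (Matrix.det_eq_zero_of_row_eq_zero a fun b => hc b)
    -- t \ s ⊆ {j}
    have hts : t.1 \ s.1 ⊆ {j} := by
      intro y hy
      rcases Finset.mem_sdiff.1 hy with ⟨hyt, hys⟩
      rw [← image_emb t] at hyt
      obtain ⟨b, _, rfl⟩ := Finset.mem_image.1 hyt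
      obtain ⟨a, ha⟩ := hcol b
      rcases transvection_apply_ne_zero c ha with he | ⟨h1, h2⟩
      · exact absurd (he ▸ emb_mem s a) hys
      · simp [h2]
    have hst' : s.1 \ t.1 ⊆ {i} := by
      intro x hx
      rcases Finset.mem_sdiff.1 hx with ⟨hxs, hxt⟩
      rw [← image_emb s] at hxs
      obtain ⟨a, _, rfl⟩ := Finset.mem_image.1 hxs
      obtain ⟨b, hb⟩ := hrow a
      rcases transvection_apply_ne_zero c hb with he | ⟨h1, h2⟩
      · exact absurd (he ▸ emb_mem t b) hxt
      · simp [h1]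
    have hcards : (s.1 \ t.1).card = (t.1 \ s.1).card :=
      Finset.card_sdiff_comm (by rw [s.2, t.2])
    have hne : (s.1 \ t.1).Nonempty := by
      rw [Finset.nonempty_iff_ne_empty]
      intro hemp
      apply hseq
      apply Subtype.ext
      exact Finset.eq_of_subset_of_card_le
        (fun x hx => by
          by_contra hxt
          exact absurd (Finset.mem_sdiff.2 ⟨hx, hxt⟩) (by simp [hemp]))
        (by rw [s.2, t.2])
    have hsi : s.1 \ t.1 = {i} :=
      Finset.eq_of_subset_of_card_le hst'
        (by rw [Finset.card_singleton]; exact Finset.card_pos.2 hne)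
    have htj : t.1 \ s.1 = {j} :=
      Finset.eq_of_subset_of_card_le hts
        (by rw [Finset.card_singleton, ← hcards, hsi, Finset.card_singleton])
    have h1 : (∑ x ∈ s.1, (x : ℤ)) = (∑ x ∈ s.1 ∩ t.1, (x : ℤ)) + i := by
      rw [← Finset.sum_inter_add_sum_sdiff s.1 t.1 (fun x => (x : ℤ)), hsi,
        Finset.sum_singleton]
    have h2 : (∑ x ∈ t.1, (x : ℤ)) = (∑ x ∈ s.1 ∩ t.1, (x : ℤ)) + j := by
      rw [← Finset.sum_inter_add_sum_sdiff t.1 s.1 (fun x => (x : ℤ)), htj,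
        Finset.sum_singleton, Finset.inter_comm]
    rw [h1, h2]
    have : (i : ℤ) < (j : ℤ) := by exact_mod_cast hij
    omega

lemma transvection_transpose (i j : Fin n) (c : ℝ) :
    (Matrix.transvection i j c).transpose = Matrix.transvection j i c := by
  ext x y
  simp only [Matrix.transpose_apply, Matrix.transvection, Matrix.add_apply, Matrix.one_apply,
    Matrix.single, Matrix.of_apply]
  congr 1
  · simp [eq_comm]
  · congr 1
    simp [and_comm]

lemma det_cpd_transvection (t : Matrix.TransvectionStruct (Fin n) ℝ) :
    (cpd (n := n) m t.toMatrix).det = 1 := by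
  rcases lt_or_gt_of_ne t.hij with hlt | hgt
  · exact det_cpd_transvection_lt hlt t.c
  · have : t.toMatrix = (Matrix.transvection t.j t.i t.c).transpose := by
      rw [transvection_transpose]
      rfl
    rw [this, cpd_transpose, Matrix.det_transpose]
    exact det_cpd_transvection_lt hgt t.c

theorem det_cpd (hm1 : 1 ≤ m) {A : Matrix (Fin n) (Fin n) ℝ} (hA : A.det ≠ 0) :
    (cpd (n := n) m A).det = A.det ^ ((n - 1).choose (m - 1)) := by
  apply Matrix.diagonal_transvection_induction_of_det_ne_zero _ A hA
  · intro D hD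
    rw [det_cpd_diagonal hm1, Matrix.det_diagonal]
  · intro t
    rw [det_cpd_transvection, t.det, one_pow]
  · intro A B _ _ pA pB
    rw [cpd_mul, Matrix.det_mul, pA, pB, Matrix.det_mul, mul_pow]

end SF
end SFsection

theorem stmt11 {n m : ℕ} (hm1 : 1 ≤ m) (hmn : m ≤ n)
    (B : Matrix (Fin n) (Fin n) ℝ) (hdet : B.det ≠ 0) :
    Real.sqrt (extGram B m).det = (latVol B) ^ ((n - 1).choose (m - 1)) := by
  have hG : (B.transpose * B).det ≠ 0 := by
    rw [Matrix.det_mul, Matrix.det_transpose]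
    exact mul_ne_zero hdet hdet
  have hGnn : 0 ≤ (B.transpose * B).det := by
    rw [Matrix.det_mul, Matrix.det_transpose]
    exact mul_self_nonneg _
  have h1 : extGram B m = SF.cpd m (B.transpose * B) := rfl
  rw [h1, SF.det_cpd hm1 hG, latVol]
  set x := (B.transpose * B).det with hx
  have h2 : x ^ ((n - 1).choose (m - 1)) = (Real.sqrt x ^ ((n - 1).choose (m - 1))) ^ 2 := by
    rw [← pow_mul, mul_comm, pow_mul, Real.sq_sqrt hGnn]
  rw [h2, Real.sqrt_sq (pow_nonneg (Real.sqrt_nonneg x) _)]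
end

section
/- In the F_2 simplicial chain complex of the boundary of the (n+1)-simplex (with C_r having basis the (r+1)-subsets of {1,...,n+2}), for any v in C_q with d_q(v) != 0, the vector x = (d_q v) ∪ {1} satisfies d_q(x) = d_q(v) and wt(x) <= wt(d_q v). Consequently, setting u = x - v gives d_q(u) = 0 and wt(v + u) <= wt(d_q v), so the soundness parameter epsilon satisfies epsilon >= 1. -/
/-!
The chain `x = ∂v ∪ {1}` is the cone on `∂v` with apex `1`, and coning is a contracting
homotopy of the (reduced) simplex: `∂(w ∪ {1}) + (∂w) ∪ {1} = w`, where for `0`-chains the second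
term is absent. Since `∂∂ = 0`, this gives `∂x = ∂v`. Coning maps the support of `x`
injectively (by `S ↦ S \ {1}`) into that of `∂v`, so `wt x ≤ wt (∂v)`, and `u = x - v` is the
required cycle.
-/

open scoped BigOperators

/-- The `F₂` simplicial boundary map on the simplex with vertex set `Fin N`:
sends a chain of cells labelled by `(r+1)`-element subsets to the chain of cells
labelled by `r`-element subsets, each cell going to the sum of its maximal faces. -/
noncomputable def simpBnd (N r : ℕ)
    (v : {S : Finset (Fin N) // S.card = r + 1} → ZMod 2) :
    {S : Finset (Fin N) // S.card = r} → ZMod 2 :=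
  fun T => ∑ S : {S : Finset (Fin N) // S.card = r + 1},
    if T.1 ⊆ S.1 then v S else 0

/-- Number of nonzero coefficients (weight) of a chain. -/
noncomputable def wt {ι : Type*} [Fintype ι] (v : ι → ZMod 2) : ℕ :=
  (Finset.univ.filter fun i => v i ≠ 0).card

/-- The chain `w ∪ {1}`: each cell `T` with `1 ∉ T` is sent to the cell `T ∪ {1}`,
and cells containing `1` are sent to `0`. -/
def cupOne (n q : ℕ) (w : {S : Finset (Fin (n + 2)) // S.card = q} → ZMod 2) :
    {S : Finset (Fin (n + 2)) // S.card = q + 1} → ZMod 2 :=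
  fun S => if h : (1 : Fin (n + 2)) ∈ S.1 then
    w ⟨S.1.erase 1, by rw [Finset.card_erase_of_mem h, S.2]; rfl⟩ else 0

open Finset

lemma sum_sum_erase_eq_zero_of_symm {α R : Type*} [DecidableEq α] [Ring R] [CharP R 2]
    (A : Finset α) (g : α → α → R) (hg : ∀ x y, g x y = g y x) :
    ∑ x ∈ A, ∑ y ∈ A.erase x, g x y = 0 := by
  rw [← sum_finset_product' A.offDiag A A.erase fun p => by
    simp only [mem_offDiag, mem_erase]; tauto]
  refine sum_involution (fun p _ => p.swap)
    (fun p _ => by rw [hg]; exact CharTwo.add_self_eq_zero _) (fun p hp _ h => ?_)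
    (fun p hp => ?_) (fun _ _ => rfl)
  · exact (mem_offDiag.mp hp).2.2 (congrArg Prod.fst h).symm
  · obtain ⟨h₁, h₂, hne⟩ := mem_offDiag.mp hp
    exact mem_offDiag.mpr ⟨h₂, h₁, hne.symm⟩

section ExtendByZero

variable {α M : Type*} [Zero M] {p : α → Prop}

lemma extend_subtypeVal_apply (v : Subtype p → M) {a : α} (h : p a) :
    Function.extend Subtype.val v 0 a = v ⟨a, h⟩ :=
  Subtype.val_injective.extend_apply v 0 ⟨a, h⟩

lemma extend_subtypeVal_apply_of_not (v : Subtype p → M) {a : α} (h : ¬p a) :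
    Function.extend Subtype.val v 0 a = 0 :=
  Function.extend_apply' _ _ _ (by rintro ⟨b, rfl⟩; exact h b.2)

end ExtendByZero

section Chains

variable {N r : ℕ}

lemma simpBnd_sub (a b : {S : Finset (Fin N) // S.card = r + 1} → ZMod 2) :
    simpBnd N r (a - b) = simpBnd N r a - simpBnd N r b := by
  funext T
  simp only [simpBnd, Pi.sub_apply, ← sum_sub_distrib]
  exact sum_congr rfl fun S _ => by split <;> simp

/- Extending chains by zero to all finsets lets us index cofaces `insert x T` by the vertices
`x ∉ T` without carrying cardinality proofs. -/
lemma simpBnd_apply_eq_sum_compl (v : {S : Finset (Fin N) // S.card = r + 1} → ZMod 2)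
    (T : {S : Finset (Fin N) // S.card = r}) :
    simpBnd N r v T = ∑ x ∈ T.1ᶜ, Function.extend Subtype.val v 0 (insert x T.1) := by
  set v₀ := Function.extend Subtype.val v 0
  have hcofaces : (T.1ᶜ).image (insert · T.1) = (powersetCard (r + 1) univ).filter (T.1 ⊆ ·) := by
    ext S
    simp only [mem_image, mem_compl, mem_filter, mem_powersetCard_univ, ← T.2]
    rw [exists_eq_insert_iff]
    tauto
  calc simpBnd N r v T
      = ∑ S : {S : Finset (Fin N) // S.card = r + 1}, if T.1 ⊆ S.1 then v₀ S.1 else 0 := by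
        simp only [simpBnd, v₀, Subtype.val_injective.extend_apply]
    _ = ∑ S ∈ (powersetCard (r + 1) univ).filter (T.1 ⊆ ·), v₀ S := by
        rw [sum_filter, sum_subtype _ fun S => mem_powersetCard_univ]
    _ = ∑ x ∈ T.1ᶜ, v₀ (insert x T.1) := by
        rw [← hcofaces, sum_image fun x hx y hy h => (insert_inj (mem_compl.mp hx)).mp h]

lemma simpBnd_simpBnd (v : {S : Finset (Fin N) // S.card = r + 1 + 1} → ZMod 2) :
    simpBnd N r (simpBnd N (r + 1) v) = 0 := by
  funext R
  rw [simpBnd_apply_eq_sum_compl, Pi.zero_apply]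
  calc _ = ∑ x ∈ R.1ᶜ, ∑ y ∈ R.1ᶜ.erase x,
        Function.extend Subtype.val v 0 (insert y (insert x R.1)) := by
        refine sum_congr rfl fun x hx => ?_
        rw [extend_subtypeVal_apply _ (by rw [card_insert_of_notMem (mem_compl.mp hx), R.2]),
          simpBnd_apply_eq_sum_compl, compl_insert]
    _ = 0 := sum_sum_erase_eq_zero_of_symm _ _ fun x y => by rw [insert_comm]

end Chains

section Cone

variable {n q : ℕ}

lemma cupOne_apply_of_notMem (w : {S : Finset (Fin (n + 2)) // S.card = q} → ZMod 2)
    {S : {S : Finset (Fin (n + 2)) // S.card = q + 1}} (h : 1 ∉ S.1) : cupOne n q w S = 0 :=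
  dif_neg h

lemma cupOne_apply_of_mem (w : {S : Finset (Fin (n + 2)) // S.card = q} → ZMod 2)
    {S : {S : Finset (Fin (n + 2)) // S.card = q + 1}} (h : 1 ∈ S.1) :
    cupOne n q w S = Function.extend Subtype.val w 0 (S.1.erase 1) :=
  (dif_pos h).trans (extend_subtypeVal_apply _ _).symm

@[simp]
lemma cupOne_zero : cupOne n q 0 = 0 := by
  funext S
  simp [cupOne]

lemma extend_cupOne (w : {S : Finset (Fin (n + 2)) // S.card = q} → ZMod 2)
    (S : Finset (Fin (n + 2))) :
    Function.extend Subtype.val (cupOne n q w) 0 S =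
      if 1 ∈ S then Function.extend Subtype.val w 0 (S.erase 1) else 0 := by
  by_cases hS : S.card = q + 1
  · rw [extend_subtypeVal_apply (cupOne n q w) hS]
    split_ifs with h1
    · exact cupOne_apply_of_mem w h1
    · exact cupOne_apply_of_notMem w h1
  · rw [extend_subtypeVal_apply_of_not (cupOne n q w) hS]
    split_ifs with h1
    · refine (extend_subtypeVal_apply_of_not w ?_).symm
      have := card_pos.mpr ⟨_, h1⟩
      rw [card_erase_of_mem h1]
      omega
    · rfl

lemma simpBnd_cupOne_apply_of_notMem (w : {S : Finset (Fin (n + 2)) // S.card = q} → ZMod 2)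
    {T : {S : Finset (Fin (n + 2)) // S.card = q}} (hT : 1 ∉ T.1) :
    simpBnd (n + 2) q (cupOne n q w) T = w T := by
  rw [simpBnd_apply_eq_sum_compl, sum_eq_single_of_mem 1 (mem_compl.mpr hT)]
  · rw [extend_cupOne, if_pos (mem_insert_self _ _), erase_insert hT,
      extend_subtypeVal_apply w T.2]
  · intro x _ hx
    rw [extend_cupOne, if_neg]
    simp [hx.symm, hT]

lemma simpBnd_cupOne_add_cupOne_simpBnd
    (w : {S : Finset (Fin (n + 2)) // S.card = q + 1} → ZMod 2) :
    simpBnd (n + 2) (q + 1) (cupOne n (q + 1) w) + cupOne n q (simpBnd (n + 2) q w) = w := by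
  funext T
  rw [Pi.add_apply]
  by_cases hT : 1 ∈ T.1
  · have hcard : (T.1.erase 1).card = q := by rw [card_erase_of_mem hT, T.2]; rfl
    rw [cupOne_apply_of_mem _ hT, extend_subtypeVal_apply (simpBnd (n + 2) q w) hcard,
      simpBnd_apply_eq_sum_compl, simpBnd_apply_eq_sum_compl, compl_erase,
      sum_insert (by simpa using hT), insert_erase hT,
      extend_subtypeVal_apply w T.2]
    have hsum : ∀ x ∈ T.1ᶜ, Function.extend Subtype.val (cupOne n (q + 1) w) 0 (insert x T.1) =
        Function.extend Subtype.val w 0 (insert x (T.1.erase 1)) := fun x hx => by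
      rw [extend_cupOne, if_pos (mem_insert_of_mem hT), erase_insert_of_ne]
      rintro rfl
      exact mem_compl.mp hx hT
    rw [sum_congr rfl hsum, add_left_comm, CharTwo.add_self_eq_zero, add_zero]
  · rw [cupOne_apply_of_notMem _ hT, add_zero, simpBnd_cupOne_apply_of_notMem _ hT]

lemma simpBnd_cupOne_simpBnd (v : {S : Finset (Fin (n + 2)) // S.card = q + 1} → ZMod 2) :
    simpBnd (n + 2) q (cupOne n q (simpBnd (n + 2) q v)) = simpBnd (n + 2) q v := by
  cases q with
  | zero => exact funext fun T => simpBnd_cupOne_apply_of_notMem _ (by simp [card_eq_zero.mp T.2])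
  | succ q =>
    simpa [simpBnd_simpBnd] using simpBnd_cupOne_add_cupOne_simpBnd (simpBnd (n + 2) (q + 1) v)

lemma wt_cupOne_le (w : {S : Finset (Fin (n + 2)) // S.card = q} → ZMod 2) :
    wt (cupOne n q w) ≤ wt w := by
  have hmem (S : {S // cupOne n q w S ≠ 0}) : 1 ∈ S.1.1 :=
    not_not.mp fun h => S.2 (cupOne_apply_of_notMem w h)
  rw [wt, wt, ← Fintype.card_subtype, ← Fintype.card_subtype]
  refine Fintype.card_le_of_injective
    (fun S => ⟨⟨S.1.1.erase 1, by rw [card_erase_of_mem (hmem S), S.1.2]; rfl⟩, ?_⟩) ?_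
  · rw [← extend_subtypeVal_apply w, ← cupOne_apply_of_mem w (hmem S)]
    exact S.2
  · exact fun S S' h => Subtype.ext <| Subtype.ext <|
      erase_injOn' 1 (hmem S) (hmem S') (congrArg (·.1.1) h)

end Cone

theorem stmt16_general (n q : ℕ)
    (v : {S : Finset (Fin (n + 2)) // S.card = q + 1} → ZMod 2) :
    simpBnd (n + 2) q (cupOne n q (simpBnd (n + 2) q v)) = simpBnd (n + 2) q v ∧
    wt (cupOne n q (simpBnd (n + 2) q v)) ≤ wt (simpBnd (n + 2) q v) ∧
    simpBnd (n + 2) q (cupOne n q (simpBnd (n + 2) q v) - v) = 0 ∧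
    wt (v + (cupOne n q (simpBnd (n + 2) q v) - v)) ≤ wt (simpBnd (n + 2) q v) := by
  have hbnd := simpBnd_cupOne_simpBnd (n := n) v
  have hwt := wt_cupOne_le (simpBnd (n + 2) q v)
  refine ⟨hbnd, hwt, ?_, ?_⟩
  · rw [simpBnd_sub, hbnd, sub_self]
  · rwa [add_sub_cancel]

theorem stmt16 (n q : ℕ)
    (v : {S : Finset (Fin (n + 2)) // S.card = q + 1} → ZMod 2)
    (hv : simpBnd (n + 2) q v ≠ 0) :
    simpBnd (n + 2) q (cupOne n q (simpBnd (n + 2) q v)) = simpBnd (n + 2) q v ∧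
    wt (cupOne n q (simpBnd (n + 2) q v)) ≤ wt (simpBnd (n + 2) q v) ∧
    simpBnd (n + 2) q (cupOne n q (simpBnd (n + 2) q v) - v) = 0 ∧
    wt (v + (cupOne n q (simpBnd (n + 2) q v) - v)) ≤ wt (simpBnd (n + 2) q v) :=
  stmt16_general n q v
end
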